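/- arXiv:1111.4914 — 5 statements merged into one kernel-verified Lean document; each statement's English description precedes it below -/
import Mathlib

section
/- Let K be a perfectoid field and ϖ ∈ K^× with |p| ≤ |ϖ| < 1. Then the natural projection map from the multiplicative monoid lim_{x ↦ x^p} K° (inverse limit along the p-power map) to lim_Φ K°/ϖ (inverse limit along the Frobenius Φ on K°/ϖ) is a bijection. -/
/-- A perfectoid field, encoded via a rank-1 valuation `Valued K NNReal` plus completeness. -/
def IsPerfectoidField (K : Type*) [Field K] [Valued K NNReal] (p : ℕ) : Prop :=
  (¬ ∃ γ : NNReal, ∀ x : K, x ≠ 0 → ∃ n : ℤ, Valued.v x = γ ^ n) ∧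
  Valued.v (p : K) < 1 ∧
  (∀ x : K, Valued.v x ≤ 1 → ∃ y : K, Valued.v y ≤ 1 ∧ Valued.v (x - y ^ p) ≤ Valued.v (p : K))

/-! If `a ≡ b` mod `ϖ` with `a, b` integral, then `|a^p - b^p| ≤ |ϖ| |a - b|`: the inner
binomial coefficients are divisible by `p` and `|p| ≤ |ϖ|`. Iterating,
`|a^{p^m} - b^{p^m}| ≤ |ϖ|^m`. Since `x_n = x_{n+m}^{p^m}` in a compatible system, two systems
agreeing mod `ϖ` agree. Conversely, for arbitrary lifts `y_n` of a compatible system of residues,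
`m ↦ y_{n+m}^{p^m}` is Cauchy, and the limits form a compatible system lifting it. -/

theorem pow_pow_eq_of_pow_succ_eq {M : Type*} [Monoid M] {p : ℕ} {x : ℕ → M}
    (hx : ∀ n, x (n + 1) ^ p = x n) (n m : ℕ) : x (n + m) ^ p ^ m = x n := by
  induction m with
  | zero => simp
  | succ m ih => rw [← ih, ← hx (n + m), pow_succ', pow_mul]; rfl

namespace Valuation

section CommRing

variable {R Γ₀ : Type*} [CommRing R] [LinearOrderedCommMonoidWithZero Γ₀] (v : Valuation R Γ₀)

theorem map_natCast_le_one (n : ℕ) : v n ≤ 1 := by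
  induction n with
  | zero => simp
  | succ n ih => push_cast; exact v.map_add_le ih v.map_one.le

theorem map_sub_le_of_forall_map_succ_sub_le {f : ℕ → R} {s : Γ₀}
    (hf : ∀ m, v (f (m + 1) - f m) ≤ s) (m : ℕ) : v (f m - f 0) ≤ s := by
  induction m with
  | zero => simp
  | succ m ih => rw [← sub_add_sub_cancel]; exact v.map_add_le (hf m) ih

theorem map_pow_sub_pow_le {p : ℕ} (hp : p.Prime) {r : Γ₀} (hpr : v p ≤ r) (hr : r ≤ 1)
    {a b : R} (hb : v b ≤ 1) (hab : v (a - b) ≤ r) : v (a ^ p - b ^ p) ≤ r * v (a - b) := by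
  have hab1 : v (a - b) ≤ 1 := hab.trans hr
  have hexpand : a ^ p - b ^ p =
      ∑ i ∈ Finset.range p, b ^ i * (a - b) ^ (p - i) * (p.choose i : R) := by
    rw [← add_sub_cancel b a, add_pow, Finset.sum_range_succ]
    simp
  rw [hexpand]
  refine v.map_sum_le fun i hi => ?_
  rw [Finset.mem_range] at hi
  simp only [map_mul, map_pow]
  rcases eq_or_ne i 0 with rfl | hi0
  · simp only [pow_zero, one_mul, Nat.sub_zero, Nat.choose_zero_right, Nat.cast_one, map_one,
      mul_one]
    calc v (a - b) ^ p ≤ v (a - b) ^ 2 := pow_le_pow_right_of_le_one' hab1 hp.two_le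
      _ ≤ r * v (a - b) := by rw [sq]; exact mul_le_mul_left hab _
  · obtain ⟨c, hc⟩ := hp.dvd_choose_self hi0 hi
    have hchoose : v (p.choose i : R) ≤ r := by
      rw [hc, Nat.cast_mul, map_mul]
      exact mul_le_of_le_of_le_one hpr (v.map_natCast_le_one c)
    calc v b ^ i * v (a - b) ^ (p - i) * v (p.choose i : R) ≤ 1 * v (a - b) * r :=
          mul_le_mul' (mul_le_mul' (pow_le_one' hb i)
            (pow_le_of_le_one zero_le hab1 (by omega))) hchoose
      _ = r * v (a - b) := by rw [one_mul, mul_comm]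

theorem map_pow_pow_sub_pow_pow_le {p : ℕ} (hp : p.Prime) {r : Γ₀} (hpr : v p ≤ r) (hr : r ≤ 1)
    (m : ℕ) {a b : R} (ha : v a ≤ 1) (hb : v b ≤ 1) (hab : v (a - b) ≤ r) :
    v (a ^ p ^ m - b ^ p ^ m) ≤ r ^ m * v (a - b) := by
  induction m generalizing a b with
  | zero => simp
  | succ m ih =>
    have hstep := v.map_pow_sub_pow_le hp hpr hr hb hab
    have hpow (c : R) (hc : v c ≤ 1) : v (c ^ p) ≤ 1 := by rw [map_pow]; exact pow_le_one' hc p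
    calc v (a ^ p ^ (m + 1) - b ^ p ^ (m + 1)) = v ((a ^ p) ^ p ^ m - (b ^ p) ^ p ^ m) := by
          rw [pow_succ', pow_mul, pow_mul]
      _ ≤ r ^ m * v (a ^ p - b ^ p) :=
          ih (hpow a ha) (hpow b hb) (hstep.trans (mul_le_of_le_one_right' (hab.trans hr)))
      _ ≤ r ^ m * (r * v (a - b)) := mul_le_mul_right hstep _
      _ = r ^ (m + 1) * v (a - b) := by rw [pow_succ, mul_assoc]

end CommRing

theorem mk_eq_mk_iff_map_sub_le {K Γ₀ : Type*} [Field K] [LinearOrderedCommGroupWithZero Γ₀]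
    {v : Valuation K Γ₀} (ϖ a b : v.integer) :
    Ideal.Quotient.mk (Ideal.span {ϖ}) a = Ideal.Quotient.mk (Ideal.span {ϖ}) b ↔
      v ((a : K) - b) ≤ v ϖ := by
  rw [Ideal.Quotient.eq, Ideal.mem_span_singleton, ← (integer.integers v).le_iff_dvd]
  rfl

theorem eq_of_forall_map_sub_le {K : Type*} [Field K] (v : Valuation K NNReal) {p : ℕ}
    (hp : p.Prime) {r : NNReal} (hpr : v p ≤ r) (hr : r < 1) {x y : ℕ → v.integer}
    (hx : ∀ n, x (n + 1) ^ p = x n) (hy : ∀ n, y (n + 1) ^ p = y n)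
    (hxy : ∀ n, v ((x n : K) - y n) ≤ r) : x = y := by
  funext n
  suffices v ((x n : K) - y n) = 0 by
    exact Subtype.ext (sub_eq_zero.mp ((v.zero_iff).mp this))
  refine le_antisymm (ge_of_tendsto' (NNReal.tendsto_pow_atTop_nhds_zero_of_lt_one hr)
    fun m => ?_) zero_le
  rw [← pow_pow_eq_of_pow_succ_eq hx n m, ← pow_pow_eq_of_pow_succ_eq hy n m]
  push_cast
  exact (v.map_pow_pow_sub_pow_pow_le hp hpr hr.le m (x (n + m)).2 (y (n + m)).2
    (hxy (n + m))).trans (mul_le_of_le_one_right' ((hxy (n + m)).trans hr.le))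

end Valuation

namespace Valued

variable {K : Type*} [Field K] [Valued K NNReal]

theorem isClosed_setOf_map_sub_le (c d : K) : IsClosed {z : K | v (z - c) ≤ v d} := by
  simpa only [Set.preimage_ofPred_eq, Valuation.restrict_le_iff] using
    (isClosed_closedBall K (v.restrict d)).preimage (continuous_sub_right c)

theorem cauchySeq_of_map_sub_le_pow {r : NNReal} (hr : r < 1) {f : ℕ → K}
    (hf : ∀ m, v (f (m + 1) - f m) ≤ r ^ m) : CauchySeq f := by
  rw [(hasBasis_uniformity K NNReal).cauchySeq_iff]
  rintro γ -
  have hγ : 0 < (MonoidWithZeroHom.ValueGroup₀.embedding γ.1 : NNReal) :=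
    pos_iff_ne_zero.mpr fun h => γ.ne_zero (MonoidWithZeroHom.ValueGroup₀.embedding_injective
      (h.trans (map_zero _).symm))
  obtain ⟨N, hN⟩ := exists_pow_lt_of_lt_one hγ hr
  have htail (k : ℕ) : v (f (N + k) - f N) ≤ r ^ N :=
    v.map_sub_le_of_forall_map_succ_sub_le (f := fun k => f (N + k))
      (fun m => (hf (N + m)).trans (pow_le_pow_right_of_le_one' hr.le (by omega))) k
  refine ⟨N, fun i hi j hj => ?_⟩
  obtain ⟨i, rfl⟩ := Nat.exists_eq_add_of_le hi
  obtain ⟨j, rfl⟩ := Nat.exists_eq_add_of_le hj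
  rw [Set.mem_ofPred_eq, Valuation.restrict_lt_iff_lt_embedding,
    ← sub_sub_sub_cancel_right _ _ (f N)]
  exact (v.map_sub _ _).trans_lt (max_le (htail j) (htail i) |>.trans_lt hN)

theorem exists_pow_succ_eq_of_map_pow_succ_sub_le [CompleteSpace K] {p : ℕ} (hp : p.Prime)
    {ϖ : K} (hpϖ : v (p : K) ≤ v ϖ) (hϖ : v ϖ < 1) (y : ℕ → (v : Valuation K NNReal).integer)
    (hy : ∀ n, v ((y (n + 1) : K) ^ p - (y n : K)) ≤ v ϖ) :
    ∃ x : ℕ → (v : Valuation K NNReal).integer,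
      (∀ n, x (n + 1) ^ p = x n) ∧ ∀ n, v ((x n : K) - (y n : K)) ≤ v ϖ := by
  set u : ℕ → ℕ → K := fun n m => ((y (n + m) ^ p ^ m : v.integer) : K) with hu
  have hshift (n m : ℕ) : u (n + 1) m ^ p = u n (m + 1) := by
    simp only [hu, ← SubmonoidClass.coe_pow, ← pow_mul, ← pow_succ,
      show n + 1 + m = n + (m + 1) by omega]
  have hstep (n m : ℕ) : v (u n (m + 1) - u n m) ≤ v ϖ ^ m * v ϖ :=
    calc v (u n (m + 1) - u n m)
        = v (((y (n + m + 1) : K) ^ p) ^ p ^ m - (y (n + m) : K) ^ p ^ m) := by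
          rw [← hshift, hu]
          simp only [SubmonoidClass.coe_pow, Nat.add_right_comm n 1 m, pow_right_comm _ (p ^ m) p]
      _ ≤ v ϖ ^ m * v ((y (n + m + 1) : K) ^ p - y (n + m)) :=
          v.map_pow_pow_sub_pow_pow_le hp hpϖ hϖ.le m (y (n + m + 1) ^ p).2 (y (n + m)).2
            (hy (n + m))
      _ ≤ v ϖ ^ m * v ϖ := mul_le_mul_right (hy (n + m)) _
  choose x hx using fun n => cauchySeq_tendsto_of_complete <|
    cauchySeq_of_map_sub_le_pow hϖ fun m => (hstep n m).trans (mul_le_of_le_one_right' hϖ.le)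
  have hx_int (n : ℕ) : x n ∈ v.integer :=
    (isClosed_integer K).mem_of_tendsto (hx n) (.of_forall fun m => (y (n + m) ^ p ^ m).2)
  have hx_sub (n : ℕ) : v (x n - y n) ≤ v ϖ :=
    (isClosed_setOf_map_sub_le _ ϖ).mem_of_tendsto (hx n) (.of_forall fun m => by
      simpa [hu] using v.map_sub_le_of_forall_map_succ_sub_le (fun k => (hstep n k).trans
        (mul_le_of_le_one_left' (pow_le_one' hϖ.le k))) m)
  have hx_pow (n : ℕ) : x (n + 1) ^ p = x n :=
    tendsto_nhds_unique (by simpa only [hshift] using (hx (n + 1)).pow p)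
      (by simpa only [Function.comp_def] using (hx n).comp (Filter.tendsto_add_atTop_nat 1))
  exact ⟨fun n => ⟨x n, hx_int n⟩, fun n => Subtype.ext (by push_cast; exact hx_pow n),
    hx_sub⟩

end Valued

/-- For a perfectoid field `K` and `ϖ ∈ K^×` with `|p| ≤ |ϖ| < 1`, the natural
projection from `lim_{x ↦ x^p} K°` (sequences in `K°` with `x_{n+1}^p = x_n`) to
`lim_Φ K°/ϖ` (sequences in `K°/ϖ` with `x̄_{n+1}^p = x̄_n`), given by reduction
mod `ϖ` in each coordinate, is a bijection. -/
theorem tilt_projection_bijective (K : Type*) [Field K] [Valued K NNReal] [CompleteSpace K]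
    (p : ℕ) (hp : p.Prime)
    (ϖ : K) (hϖp : Valued.v (p : K) ≤ Valued.v ϖ) (hϖ1 : Valued.v ϖ < 1) :
    Function.Bijective
      (fun x : {f : ℕ → ((Valued.v : Valuation K NNReal).integer) // ∀ n, f (n + 1) ^ p = f n} =>
        (⟨fun n => Ideal.Quotient.mk
            (Ideal.span {(⟨ϖ, le_of_lt hϖ1⟩ : (Valued.v : Valuation K NNReal).integer)}) (x.1 n),
          fun n => by rw [← map_pow, x.2 n]⟩ :
          {g : ℕ → ((Valued.v : Valuation K NNReal).integer ⧸
              Ideal.span {(⟨ϖ, le_of_lt hϖ1⟩ : (Valued.v : Valuation K NNReal).integer)}) //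
            ∀ n, g (n + 1) ^ p = g n})) := by
  constructor
  · intro x x' h
    refine Subtype.ext (Valued.v.eq_of_forall_map_sub_le hp hϖp hϖ1 x.2 x'.2 fun n => ?_)
    exact (Valuation.mk_eq_mk_iff_map_sub_le _ _ _).mp (congrFun (congrArg Subtype.val h) n)
  · intro g
    choose y hy using fun n => Ideal.Quotient.mk_surjective (g.1 n)
    obtain ⟨x, hx, hxy⟩ := Valued.exists_pow_succ_eq_of_map_pow_succ_sub_le hp hϖp hϖ1 y
      fun n => by
        rw [← SubmonoidClass.coe_pow]
        exact (Valuation.mk_eq_mk_iff_map_sub_le (v := Valued.v) ⟨ϖ, le_of_lt hϖ1⟩ _ _).mp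
          (by rw [map_pow, hy, hy, g.2 n])
    refine ⟨⟨x, hx⟩, Subtype.ext (funext fun n => ?_)⟩
    rw [← hy n]
    exact (Valuation.mk_eq_mk_iff_map_sub_le _ _ _).mpr (hxy n)
end

section
/- Let K be a perfectoid field whose tilt K^♭ is algebraically closed. Then K is algebraically closed. -/
/-!
Scholze's approximation argument. A monic polynomial over `K` can be rescaled to have integral
coefficients. Given an integral `x`, expand it at `x` and substitute `X ↦ c X`, where `|c|` is the
dominant slope of the Newton polygon (it exists because `|K^×| = |K^{♭×}|` is divisible, `K^♭`
being algebraically closed); the result is integral with a unit coefficient in positive degree.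
Lifting its coefficients to `K^♭` modulo `ϖ` gives a polynomial with an integral root `w`, and as
`♯` is additive modulo `p`, `w^♯` is a root modulo `ϖ`. So `x` can be moved by at most
`|f(x)|^{1/d}` to a point where `|f|` is smaller by a factor `|ϖ|`; by completeness the iterates
converge to a root.
-/

open Polynomial Filter Topology

theorem Polynomial.X_sub_C_eq_C_neg_mul {K : Type*} [Field K] {w : K} (hw : w ≠ 0) :
    X - C w = C (-w) * (1 - C w⁻¹ * X) := by
  rw [mul_sub, mul_one, ← mul_assoc, ← C_mul, neg_mul, mul_inv_cancel₀ hw, C_neg, C_neg, C_1]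
  ring

namespace Valuation

section CommRing

variable {R Γ₀ : Type*} [LinearOrderedCommGroupWithZero Γ₀]

theorem map_eval_le_one [CommRing R] (v : Valuation R Γ₀) {f : R[X]}
    (hf : ∀ i, v (f.coeff i) ≤ 1) {x : R} (hx : v x ≤ 1) : v (f.eval x) ≤ 1 := by
  rw [eval_eq_sum_range]
  refine v.map_sum_le fun i _ => ?_
  rw [map_mul, map_pow]
  exact mul_le_one' (hf i) (pow_le_one' hx i)

theorem map_add_pow_prime_pow_sub_le [CommRing R] (v : Valuation R Γ₀) {p : ℕ} (hp : p.Prime)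
    {a b : R} (ha : v a ≤ 1) (hb : v b ≤ 1) (n : ℕ) :
    v ((a + b) ^ p ^ n - (a ^ p ^ n + b ^ p ^ n)) ≤ v p := by
  obtain ⟨r, hr⟩ := exists_add_pow_prime_pow_eq hp (⟨a, ha⟩ : v.integer) ⟨b, hb⟩ n
  have hr' := congrArg Subtype.val hr
  push_cast at hr'
  rw [hr', add_sub_cancel_left, mul_assoc, mul_assoc, map_mul, map_mul, map_mul]
  exact mul_le_of_le_one_right' (mul_le_one' ha (mul_le_one' hb r.2))

end CommRing

section Field

variable {K Γ₀ : Type*} [Field K] [LinearOrderedCommGroupWithZero Γ₀] (v : Valuation K Γ₀)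

theorem coeff_prod_one_sub_C_mul_X (s : Multiset K) (hs : ∀ u ∈ s, v u < 1) :
    (s.map fun u => 1 - C u * X).prod.coeff 0 = 1 ∧
      ∀ k ≠ 0, v ((s.map fun u => 1 - C u * X).prod.coeff k) < 1 := by
  induction s using Multiset.induction_on with
  | empty => exact ⟨by simp, fun k hk => by simp [coeff_one, hk]⟩
  | cons u s ih =>
    rw [Multiset.map_cons, Multiset.prod_cons]
    obtain ⟨h0, hlt⟩ := ih fun w hw => hs w (Multiset.mem_cons_of_mem hw)
    generalize (s.map fun u => 1 - C u * X).prod = Q at h0 hlt ⊢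
    have hle : ∀ k, v (Q.coeff k) ≤ 1 := fun k => by
      rcases eq_or_ne k 0 with rfl | hk
      · rw [h0, map_one]
      · exact (hlt k hk).le
    rw [sub_mul, one_mul, mul_assoc]
    refine ⟨by simp [h0], fun k hk => ?_⟩
    obtain ⟨k, rfl⟩ := Nat.exists_eq_succ_of_ne_zero hk
    rw [coeff_sub, coeff_C_mul, coeff_X_mul]
    exact v.map_sub_lt (hlt _ hk) <| by
      rw [map_mul]
      exact mul_lt_one_of_lt_of_le (hs u (Multiset.mem_cons_self u s)) (hle k)

/-- If all roots `w` had `v w > 1`, then `h = h(0) · ∏ (1 - X / w)` and every coefficient of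
positive index of the product is `< 1`. -/
theorem exists_isRoot_le_one [IsAlgClosed K] {h : K[X]} (hc : ∀ i, v (h.coeff i) ≤ 1) {j : ℕ}
    (hj : j ≠ 0) (hj1 : v (h.coeff j) = 1) : ∃ w, h.IsRoot w ∧ v w ≤ 1 := by
  by_contra! hroots
  have hroot_ne : ∀ w ∈ h.roots, w ≠ 0 := fun w hw h0 =>
    (hroots w (isRoot_of_mem_roots hw)).not_ge (by simp [h0])
  set Q := ((h.roots.map (·⁻¹)).map fun u => 1 - C u * X).prod with hQ_def
  obtain ⟨hQ0, hQ⟩ := v.coeff_prod_one_sub_C_mul_X (h.roots.map (·⁻¹)) <| by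
    simp only [Multiset.mem_map]
    rintro _ ⟨w, hw, rfl⟩
    rw [map_inv₀]
    exact inv_lt_one_of_one_lt₀ (hroots w (isRoot_of_mem_roots hw))
  have hfac : h = C (h.leadingCoeff * (h.roots.map (-·)).prod) * Q := by
    conv_lhs =>
      rw [← C_leadingCoeff_mul_prod_multiset_X_sub_C (p := h) IsAlgClosed.card_roots_eq_natDegree]
    rw [C_mul, mul_assoc, map_multiset_prod C, hQ_def, Multiset.map_map, Multiset.map_map,
      ← Multiset.prod_map_mul]
    congr 2
    exact Multiset.map_congr rfl fun w hw => X_sub_C_eq_C_neg_mul (hroot_ne w hw)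
  have hcoeff : ∀ k, h.coeff k = h.coeff 0 * Q.coeff k := fun k => by
    rw [hfac, coeff_C_mul, coeff_C_mul, hQ0, mul_one]
  have : v (h.coeff j) < 1 := by
    rw [hcoeff, map_mul]
    exact (mul_le_of_le_one_left' (hc 0)).trans_lt (hQ j hj)
  exact this.ne hj1

/-- `v c` is the dominant slope of the Newton polygon of `F`. -/
theorem exists_scale_coeff_dominant
    (hdiv : ∀ (a : K) (n : ℕ), 0 < n → ∃ c : K, v c ^ n = v a) {F : K[X]}
    (hdeg : 0 < F.natDegree) :
    ∃ c : K, ∃ j, 0 < j ∧ v (F.coeff j) * v c ^ j = v (F.coeff 0) ∧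
      ∀ i, v (F.coeff i) * v c ^ i ≤ v (F.coeff 0) := by
  have hroot : ∀ j, ∃ c : K, 0 < j → v c ^ j = v (F.coeff 0 / F.coeff j) := fun j =>
    (Nat.eq_zero_or_pos j).elim (fun hj => ⟨0, fun h => absurd hj h.ne'⟩)
      fun hj => (hdiv _ j hj).imp fun _ h _ => h
  choose c hc using hroot
  set J := F.support.filter (0 < ·)
  have hJ : ∀ {i}, i ∈ J ↔ F.coeff i ≠ 0 ∧ 0 < i := by simp [J]
  have hslope : ∀ i ∈ J, v (F.coeff i) * v (c i) ^ i = v (F.coeff 0) := fun i hi => by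
    rw [hc i (hJ.1 hi).2, map_div₀, mul_div_cancel₀ _ ((v.ne_zero_iff).2 (hJ.1 hi).1)]
  obtain ⟨j, hjJ, hmin⟩ := J.exists_min_image (fun j => v (c j))
    ⟨F.natDegree, hJ.2 ⟨leadingCoeff_ne_zero.2 (ne_zero_of_natDegree_gt hdeg), hdeg⟩⟩
  refine ⟨c j, j, (hJ.1 hjJ).2, hslope j hjJ, fun i => ?_⟩
  by_cases hi : i ∈ J
  · calc v (F.coeff i) * v (c j) ^ i ≤ v (F.coeff i) * v (c i) ^ i := by gcongr; exact hmin i hi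
      _ = v (F.coeff 0) := hslope i hi
  · rcases eq_or_ne (F.coeff i) 0 with h | h
    · simp [h]
    · obtain rfl : i = 0 := by simpa [hJ, h] using hi
      simp

/-- Expand `f` at `x` and rescale by the dominant slope `c`: the result `g` is integral with a
unit coefficient of positive index, and `x + c y` improves on `x` for an approximate root `y`
of `g`. -/
theorem exists_newton_step
    (hdiv : ∀ (a : K) (n : ℕ), 0 < n → ∃ c : K, v c ^ n = v a) {ε : Γ₀}
    (happrox : ∀ g : K[X], (∀ i, v (g.coeff i) ≤ 1) → ∀ j ≠ 0, v (g.coeff j) = 1 →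
      ∃ y, v y ≤ 1 ∧ v (g.eval y) ≤ ε)
    {f : K[X]} (hm : f.Monic) (hdeg : 0 < f.natDegree) (hc : ∀ i, v (f.coeff i) ≤ 1)
    {x : K} (hx : v x ≤ 1) :
    ∃ x', v x' ≤ 1 ∧ v (x' - x) ^ f.natDegree ≤ v (f.eval x) ∧
      v (f.eval x') ≤ v (f.eval x) * ε := by
  by_cases hfx : f.eval x = 0
  · exact ⟨x, hx, by simp [hfx, zero_pow hdeg.ne'], by simp [hfx]⟩
  have hF0 : (taylor x f).coeff 0 = f.eval x := taylor_coeff_zero x f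
  have hFd : (taylor x f).coeff f.natDegree = 1 := by
    rw [← natDegree_taylor f x, ← leadingCoeff, leadingCoeff_taylor, hm.leadingCoeff]
  obtain ⟨c, j, hj, hcj, hcle⟩ := v.exists_scale_coeff_dominant hdiv
    ((natDegree_taylor f x).symm ▸ hdeg)
  rw [hF0] at hcj hcle
  set D := (taylor x f).coeff j * c ^ j
  have hvD : v D = v (f.eval x) := by rw [map_mul, map_pow, hcj]
  have hD : D ≠ 0 := (v.ne_zero_iff).1 (hvD ▸ (v.ne_zero_iff).2 hfx)
  set g := C D⁻¹ * (taylor x f).comp (C c * X)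
  have hg : ∀ i, g.coeff i = D⁻¹ * ((taylor x f).coeff i * c ^ i) := fun i => by
    rw [coeff_C_mul, comp_C_mul_X_coeff]
  obtain ⟨y, hy, hgy⟩ := happrox g
    (fun i => by
      rw [hg, map_mul, map_inv₀, hvD, map_mul, map_pow, inv_mul_le_one₀ ?_]
      · exact hcle i
      · exact zero_lt_iff.2 ((v.ne_zero_iff).2 hfx))
    j hj.ne' (by rw [hg, inv_mul_cancel₀ hD, map_one])
  have hcd : v c ^ f.natDegree ≤ v (f.eval x) := by
    simpa only [hFd, map_one, one_mul] using hcle f.natDegree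
  have hc1 : v c ≤ 1 :=
    (pow_le_one_iff hdeg.ne').1 (hcd.trans (v.map_eval_le_one hc hx))
  refine ⟨x + c * y, v.map_add_le hx ?_, ?_, ?_⟩
  · rw [map_mul]
    exact mul_le_one' hc1 hy
  · rw [add_sub_cancel_left, map_mul, mul_pow]
    exact (mul_le_of_le_one_right' (pow_le_one' hy _)).trans hcd
  · have heval : f.eval (x + c * y) = D * g.eval y := by
      rw [add_comm, ← taylor_eval, eval_mul, eval_C, mul_inv_cancel_left₀ hD, eval_comp,
        eval_mul, eval_C, eval_X]
    rw [heval, map_mul, hvD]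
    gcongr

end Field

end Valuation

namespace Valued

instance {R Γ₀ : Type*} [Ring R] [LinearOrderedCommGroupWithZero Γ₀] [Valued R Γ₀] :
    NonarchimedeanAddGroup R where
  is_nonarchimedean U hU := by
    obtain ⟨γ, -, hγ⟩ := (hasBasis_nhds_zero R Γ₀).mem_iff.1 hU
    exact ⟨⟨v.restrict.ltAddSubgroup γ, isOpen_ball R _⟩, hγ⟩

variable {K : Type*} [Field K] [Valued K NNReal]

theorem isClosed_setOf_valuation_sub_le (s : K) (M : NNReal) :
    IsClosed {u : K | v (u - s) ≤ M} := by
  refine isOpen_compl_iff.1 (isOpen_iff_mem_nhds.2 fun u hu => ?_)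
  have hu : M < v (u - s) := not_le.1 hu
  filter_upwards [(continuous_sub_right s).continuousAt.preimage_mem_nhds
    (locally_const (zero_le.trans_lt hu).ne')] with y hy
  exact fun h => hu.not_ge (hy ▸ h)

theorem tendsto_nhds_zero_of_valuation_le {α : Type*} {l : Filter α} {u : α → K}
    {ε : α → NNReal} (hε : Tendsto ε l (𝓝 0)) (hu : ∀ a, v (u a) ≤ ε a) :
    Tendsto u l (𝓝 0) := by
  refine (hasBasis_nhds_zero K NNReal).tendsto_right_iff.2 fun γ _ => ?_
  filter_upwards [hε.eventually_lt_const (MonoidWithZeroHom.ValueGroup₀.embedding_unit_pos γ)]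
    with a ha
  simpa only [Set.mem_ofPred_eq, Valuation.restrict_lt_iff_lt_embedding] using (hu a).trans_lt ha

theorem exists_isRoot_of_forall_exists_step [CompleteSpace K] {f : K[X]} {d : ℕ} (hd : 0 < d)
    {W : NNReal} (hW : W < 1)
    (hstep : ∀ x : K, v x ≤ 1 → ∃ x', v x' ≤ 1 ∧ v (x' - x) ^ d ≤ v (f.eval x) ∧
      v (f.eval x') ≤ v (f.eval x) * W)
    (h0 : v (f.eval 0) ≤ 1) : ∃ ξ, f.IsRoot ξ := by
  choose! next hnext_le hnext_sub hnext_eval using hstep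
  set x : ℕ → K := fun n => next^[n] 0
  have hx : ∀ n, v (x n) ≤ 1 ∧ v (f.eval (x n)) ≤ W ^ n := fun n => by
    induction n with
    | zero => simpa [x] using h0
    | succ n ih =>
      simp only [x, Function.iterate_succ_apply']
      refine ⟨hnext_le _ ih.1, (hnext_eval _ ih.1).trans ?_⟩
      rw [pow_succ]
      gcongr
      exact ih.2
  have hsub : ∀ n, v (x (n + 1) - x n) ≤ W ^ (n / d) := fun n => by
    refine (pow_le_pow_iff_left₀ zero_le zero_le hd.ne').1 ?_
    calc v (x (n + 1) - x n) ^ d ≤ v (f.eval (x n)) := by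
          simpa only [x, Function.iterate_succ_apply'] using hnext_sub _ (hx n).1
      _ ≤ W ^ n := (hx n).2
      _ ≤ (W ^ (n / d)) ^ d := by
          rw [← pow_mul]
          exact pow_le_pow_of_le_one zero_le hW.le (Nat.div_mul_le_self n d)
  have hWn : Tendsto (W ^ ·) atTop (𝓝 0) := tendsto_pow_atTop_nhds_zero_of_lt_one zero_le hW
  obtain ⟨ξ, hξ⟩ := cauchySeq_tendsto_of_complete <|
    NonarchimedeanAddGroup.cauchySeq_of_tendsto_sub_nhds_zero <|
      tendsto_nhds_zero_of_valuation_le (hWn.comp (Nat.tendsto_div_const_atTop hd.ne')) hsub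
  exact ⟨ξ, tendsto_nhds_unique ((f.continuous.tendsto ξ).comp hξ)
    (tendsto_nhds_zero_of_valuation_le hWn fun n => (hx n).2)⟩

theorem exists_scaleRoots_coeff_le_one {P : K[X]} (hP : P.Monic) {ϖ : K} (hϖ0 : ϖ ≠ 0)
    (hϖ1 : v ϖ < 1) : ∃ s ≠ 0, ∀ i, v ((P.scaleRoots s).coeff i) ≤ 1 := by
  set B := (Finset.range P.natDegree).sup (fun i => v (P.coeff i)) ⊔ 1
  have hB : ∀ i < P.natDegree, v (P.coeff i) ≤ B := fun i hi =>
    le_sup_of_le_left (Finset.le_sup (f := fun i => v (P.coeff i)) (Finset.mem_range.2 hi))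
  have hB1 : 0 < B := zero_lt_one.trans_le le_sup_right
  obtain ⟨m, hm⟩ := exists_pow_lt_of_lt_one (inv_pos.2 hB1) hϖ1
  refine ⟨ϖ ^ m, pow_ne_zero m hϖ0, fun i => ?_⟩
  rw [coeff_scaleRoots]
  rcases lt_trichotomy i P.natDegree with hi | rfl | hi
  · rw [map_mul, map_pow, map_pow, ← pow_mul]
    calc v (P.coeff i) * v ϖ ^ (m * (P.natDegree - i)) ≤ B * v ϖ ^ m :=
          mul_le_mul' (hB i hi) (pow_le_pow_of_le_one zero_le hϖ1.le
            (Nat.le_mul_of_pos_right m (Nat.sub_pos_of_lt hi)))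
      _ ≤ B * B⁻¹ := by gcongr
      _ = 1 := mul_inv_cancel₀ hB1.ne'
  · simp [hP.coeff_natDegree]
  · simp [coeff_eq_zero_of_natDegree_lt hi]

theorem isAlgClosed_of_exists_approx_root [CompleteSpace K] {ϖ : K} (hϖ0 : ϖ ≠ 0)
    (hϖ1 : v ϖ < 1) (hdiv : ∀ (a : K) (n : ℕ), 0 < n → ∃ c : K, v c ^ n = v a)
    (happrox : ∀ g : K[X], (∀ i, v (g.coeff i) ≤ 1) → ∀ j ≠ 0, v (g.coeff j) = 1 →
      ∃ y, v y ≤ 1 ∧ v (g.eval y) ≤ v ϖ) :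
    IsAlgClosed K := by
  refine IsAlgClosed.of_exists_root _ fun P hPm hPirr => ?_
  obtain ⟨s, hs0, hs⟩ := exists_scaleRoots_coeff_le_one hPm hϖ0 hϖ1
  have hdeg : 0 < (P.scaleRoots s).natDegree := by
    rw [natDegree_scaleRoots, natDegree_pos_iff_degree_pos]
    exact degree_pos_of_irreducible hPirr
  obtain ⟨ξ, hξ⟩ := exists_isRoot_of_forall_exists_step hdeg hϖ1
    (fun x hx => v.exists_newton_step hdiv happrox ((monic_scaleRoots_iff s).2 hPm) hdeg hs hx)
    (by simpa only [← coeff_zero_eq_eval_zero] using hs 0)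
  refine ⟨ξ / s, ?_⟩
  have h := scaleRoots_eval₂_mul (p := P) (RingHom.id K) (ξ / s) s
  rw [RingHom.id_apply, mul_div_cancel₀ _ hs0, eval₂_id, eval₂_id, hξ.eq_zero] at h
  exact (mul_eq_zero.1 h.symm).resolve_left (pow_ne_zero _ hs0)

end Valued

theorem iterate_pow_pow_eq_self {M : Type*} [Monoid M] {p : ℕ} {root : M → M}
    (hroot : ∀ x, root x ^ p = x) (n : ℕ) (x : M) : root^[n] x ^ p ^ n = x := by
  induction n generalizing x with
  | zero => simp
  | succ n ih => rw [Function.iterate_succ_apply', pow_succ', pow_mul, hroot, ih]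

theorem exists_valuation_pow_eq_of_sharp {K Kb : Type*} [Field K] [Valued K NNReal] [Field Kb]
    [IsAlgClosed Kb] (sharp : Kb →*₀ K)
    (hΓ : ∀ a : K, a ≠ 0 → ∃ x : Kb, Valued.v (sharp x) = Valued.v a)
    (a : K) {n : ℕ} (hn : 0 < n) : ∃ c : K, Valued.v c ^ n = Valued.v a := by
  rcases eq_or_ne a 0 with rfl | ha
  · exact ⟨0, by simp [hn.ne']⟩
  obtain ⟨x, hx⟩ := hΓ a ha
  obtain ⟨b, rfl⟩ := IsAlgClosed.exists_pow_nat_eq x hn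
  exact ⟨sharp b, by rw [← map_pow, ← map_pow, hx]⟩

section Tilt

variable {K Kb : Type*} [Field K] [Valued K NNReal] [Field Kb] [Valued Kb NNReal] {p : ℕ}

/-- `♯` is additive modulo `p` on the unit ball: pass to the limit in the binomial congruence
`(a + b) ^ p ^ n ≡ a ^ p ^ n + b ^ p ^ n` applied to `a = (x ^ (1/p^n))♯`, `b = (y ^ (1/p^n))♯`. -/
theorem valuation_sharp_add_sub_le (hp : p.Prime) (sharp : Kb →*₀ K)
    (hv : ∀ x, Valued.v (sharp x) = Valued.v x) {root : Kb → Kb} (hroot : ∀ x, root x ^ p = x)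
    (hlim : ∀ x y : Kb, Tendsto (fun n => (sharp (root^[n] x) + sharp (root^[n] y)) ^ p ^ n)
      atTop (𝓝 (sharp (x + y))))
    {x y : Kb} (hx : Valued.v x ≤ 1) (hy : Valued.v y ≤ 1) :
    Valued.v (sharp (x + y) - (sharp x + sharp y)) ≤ Valued.v (p : K) := by
  have hpow : ∀ n z, sharp (root^[n] z) ^ p ^ n = sharp z := fun n z => by
    rw [← map_pow, iterate_pow_pow_eq_self hroot]
  have hle : ∀ n {z : Kb}, Valued.v z ≤ 1 → Valued.v (sharp (root^[n] z)) ≤ 1 := fun n z hz =>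
    (pow_le_one_iff (pow_ne_zero n hp.ne_zero)).1 (by rwa [← map_pow, hpow, hv])
  refine (Valued.isClosed_setOf_valuation_sub_le _ _).mem_of_tendsto (hlim x y)
    (Eventually.of_forall fun n => ?_)
  simpa only [Set.mem_ofPred_eq, hpow] using
    Valued.v.map_add_pow_prime_pow_sub_le hp (hle n hx) (hle n hy) n

theorem valuation_sharp_sum_sub_le (hp : p.Prime) (sharp : Kb →*₀ K)
    (hv : ∀ x, Valued.v (sharp x) = Valued.v x) {root : Kb → Kb} (hroot : ∀ x, root x ^ p = x)
    (hlim : ∀ x y : Kb, Tendsto (fun n => (sharp (root^[n] x) + sharp (root^[n] y)) ^ p ^ n)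
      atTop (𝓝 (sharp (x + y))))
    {ι : Type*} (s : Finset ι) {z : ι → Kb} (hz : ∀ i ∈ s, Valued.v (z i) ≤ 1) :
    Valued.v (sharp (∑ i ∈ s, z i) - ∑ i ∈ s, sharp (z i)) ≤ Valued.v (p : K) := by
  classical
  induction s using Finset.induction_on with
  | empty => simp
  | insert i s hi ih =>
    rw [Finset.sum_insert hi, Finset.sum_insert hi]
    have hsplit : sharp (z i + ∑ j ∈ s, z j) - (sharp (z i) + ∑ j ∈ s, sharp (z j)) =
        (sharp (z i + ∑ j ∈ s, z j) - (sharp (z i) + sharp (∑ j ∈ s, z j))) +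
          (sharp (∑ j ∈ s, z j) - ∑ j ∈ s, sharp (z j)) := by ring
    have hzs : ∀ j ∈ s, Valued.v (z j) ≤ 1 := fun j hj => hz j (Finset.mem_insert_of_mem hj)
    rw [hsplit]
    exact Valued.v.map_add_le (valuation_sharp_add_sub_le hp sharp hv hroot hlim
      (hz i (Finset.mem_insert_self i s)) (Valued.v.map_sum_le hzs)) (ih hzs)

/-- Lift the coefficients to `K♭` modulo `ϖ`, take an integral root there, and push it back
with `♯`, which is additive up to `p`. -/
theorem exists_valuation_eval_le_of_sharp [IsAlgClosed Kb] (hp : p.Prime)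
    (sharp : Kb →*₀ K) (hv : ∀ x, Valued.v (sharp x) = Valued.v x)
    {root : Kb → Kb} (hroot : ∀ x, root x ^ p = x)
    (hlim : ∀ x y : Kb, Tendsto (fun n => (sharp (root^[n] x) + sharp (root^[n] y)) ^ p ^ n)
      atTop (𝓝 (sharp (x + y))))
    {ϖ : K} (hϖp : Valued.v (p : K) ≤ Valued.v ϖ) (hϖ1 : Valued.v ϖ < 1)
    (hsurj : ∀ a : K, Valued.v a ≤ 1 → ∃ x : Kb, Valued.v (a - sharp x) ≤ Valued.v ϖ)
    {g : K[X]} (hc : ∀ i, Valued.v (g.coeff i) ≤ 1) {j : ℕ} (hj : j ≠ 0)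
    (hj1 : Valued.v (g.coeff j) = 1) :
    ∃ y, Valued.v y ≤ 1 ∧ Valued.v (g.eval y) ≤ Valued.v ϖ := by
  choose z hz using fun i => hsurj (g.coeff i) (hc i)
  have hz1 : ∀ i, Valued.v (z i) ≤ 1 := fun i => by
    rw [← hv, ← sub_sub_cancel (g.coeff i) (sharp (z i))]
    exact Valued.v.map_sub_le (hc i) ((hz i).trans hϖ1.le)
  have hzj : Valued.v (z j) = 1 := by
    rw [← hv, ← hj1]
    refine Valued.v.map_eq_of_sub_lt ?_
    rw [Valuation.map_sub_swap, hj1]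
    exact (hz j).trans_lt hϖ1
  set n := g.natDegree
  set h : Kb[X] := ∑ i ∈ Finset.range (n + 1), C (z i) * X ^ i
  have hh : ∀ k, h.coeff k = if k < n + 1 then z k else 0 := fun k => by
    simp [h]
  obtain ⟨w, hw, hw1⟩ := Valued.v.exists_isRoot_le_one (h := h)
    (fun k => by rw [hh]; split_ifs; exacts [hz1 k, by simp]) hj
    (by rw [hh, if_pos (Nat.lt_succ_of_le (le_natDegree_of_ne_zero fun h0 => by simp [h0] at hj1)),
      hzj])
  have hzw : ∀ i ∈ Finset.range (n + 1), Valued.v (z i * w ^ i) ≤ 1 := fun i _ => by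
    rw [map_mul, map_pow]
    exact mul_le_one' (hz1 i) (pow_le_one' hw1 i)
  have hsharp := valuation_sharp_sum_sub_le hp sharp hv hroot hlim _ hzw
  rw [show ∑ i ∈ Finset.range (n + 1), z i * w ^ i = 0 by simpa [h, eval_finsetSum] using hw,
    map_zero, zero_sub, Valuation.map_neg] at hsharp
  refine ⟨sharp w, (hv w).trans_le hw1, ?_⟩
  rw [eval_eq_sum_range, ← sub_add_cancel (∑ i ∈ Finset.range (n + 1), _)
    (∑ i ∈ Finset.range (n + 1), sharp (z i * w ^ i)), ← Finset.sum_sub_distrib]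
  refine Valued.v.map_add_le (Valued.v.map_sum_le fun i _ => ?_) (hsharp.trans hϖp)
  rw [map_mul, map_pow, ← sub_mul, map_mul, map_pow]
  exact (mul_le_mul' (hz i) (pow_le_one' ((hv w).trans_le hw1) i)).trans_eq (mul_one _)

end Tilt

/-- The tilt is encoded by the multiplicative map `sharp : K^♭ → K`, `x ↦ x^♯`, together with
`|K^{♭×}| = |K^×|` (`hΓ`), the limit formula for addition in `K^♭` (`hlim`) and
`K^{♭°}/ϖ^♭ ≅ K°/ϖ` (`hsurj`). -/
theorem isAlgClosed_of_tilt_isAlgClosed_general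
    (K Kb : Type*) [Field K] [Valued K NNReal] [CompleteSpace K]
    [Field Kb] [Valued Kb NNReal]
    (p : ℕ) (hp : p.Prime)
    (ϖ : K) (hϖ0 : ϖ ≠ 0) (hϖp : Valued.v (p : K) ≤ Valued.v ϖ) (hϖ1 : Valued.v ϖ < 1)
    (sharp : Kb →*₀ K)
    (hv : ∀ x : Kb, Valued.v (sharp x) = Valued.v x)
    (root : Kb → Kb) (hroot : ∀ x, root x ^ p = x)
    (hlim : ∀ x y : Kb, Filter.Tendsto
        (fun n => (sharp (root^[n] x) + sharp (root^[n] y)) ^ p ^ n)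
        Filter.atTop (nhds (sharp (x + y))))
    (hΓ : ∀ a : K, a ≠ 0 → ∃ x : Kb, Valued.v (sharp x) = Valued.v a)
    (hsurj : ∀ a : K, Valued.v a ≤ 1 → ∃ x : Kb, Valued.v (a - sharp x) ≤ Valued.v ϖ)
    [IsAlgClosed Kb] :
    IsAlgClosed K :=
  Valued.isAlgClosed_of_exists_approx_root hϖ0 hϖ1
    (fun a _ hn => exists_valuation_pow_eq_of_sharp sharp hΓ a hn)
    (fun _ hc _ hj hj1 =>
      exists_valuation_eval_le_of_sharp hp sharp hv hroot hlim hϖp hϖ1 hsurj hc hj hj1)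

/-- If the tilt `K^♭` of a perfectoid field `K` is algebraically closed, then `K` is
algebraically closed.  The tilt is encoded abstractly: `Kb` is a perfectoid field of
characteristic `p` together with the multiplicative projection `sharp : K^♭ → K`
preserving the valuation, with `|K^{♭×}| = |K^×|` (`hΓ`), the limit formula for the
addition of the tilt (`hlim`), and `K^{♭°}/ϖ^♭ ≅ K°/ϖ` via `sharp` (`hsurj`). -/
theorem isAlgClosed_of_tilt_isAlgClosed
    (K Kb : Type*) [Field K] [Valued K NNReal] [CompleteSpace K]
    [Field Kb] [Valued Kb NNReal] [CompleteSpace Kb]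
    (p : ℕ) (hp : p.Prime) [CharP Kb p]
    (hK : IsPerfectoidField K p) (hKb : IsPerfectoidField Kb p)
    (ϖ : K) (hϖ0 : ϖ ≠ 0) (hϖp : Valued.v (p : K) ≤ Valued.v ϖ) (hϖ1 : Valued.v ϖ < 1)
    (sharp : Kb →*₀ K)
    (hv : ∀ x : Kb, Valued.v (sharp x) = Valued.v x)
    (root : Kb → Kb) (hroot : ∀ x, root x ^ p = x)
    (hlim : ∀ x y : Kb, Filter.Tendsto
        (fun n => (sharp (root^[n] x) + sharp (root^[n] y)) ^ p ^ n)
        Filter.atTop (nhds (sharp (x + y))))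
    (hΓ : ∀ a : K, a ≠ 0 → ∃ x : Kb, Valued.v (sharp x) = Valued.v a)
    (hsurj : ∀ a : K, Valued.v a ≤ 1 → ∃ x : Kb, Valued.v (a - sharp x) ≤ Valued.v ϖ)
    [IsAlgClosed Kb] :
    IsAlgClosed K :=
  isAlgClosed_of_tilt_isAlgClosed_general K Kb p hp ϖ hϖ0 hϖp hϖ1 sharp hv root hroot hlim hΓ hsurj
end

section
/- Let K be a perfectoid field and R a perfectoid K-algebra, i.e. a Banach K-algebra whose subring R° of power-bounded elements is open and bounded and on which Frobenius is surjective on R°/ϖ. Then the Frobenius map induces an isomorphism R°/ϖ^{1/p} ≅ R°/ϖ; in particular Frobenius is injective on R°/ϖ^{1/p}. -/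
/-- An element of a normed ring is power-bounded. -/
def PowerBounded {R : Type*} [SeminormedRing R] (x : R) : Prop :=
  ∃ C : ℝ, ∀ n : ℕ, ‖x ^ n‖ ≤ C

/-- A perfectoid field, encoded as a complete nontrivially normed (multiplicative, i.e.
rank-1) ultrametric field whose norm is nondiscrete and such that Frobenius is surjective
on `K°/p`.  (Completeness is imposed separately via `CompleteSpace K`.) -/
def IsPerfectoidNormedField (K : Type*) [NontriviallyNormedField K] (p : ℕ) : Prop :=
  IsUltrametricDist K ∧
  (¬ ∃ γ : ℝ, ∀ x : K, x ≠ 0 → ∃ n : ℤ, ‖x‖ = γ ^ n) ∧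
  ‖(p : K)‖ < 1 ∧
  (∀ x : K, ‖x‖ ≤ 1 → ∃ y : K, ‖y‖ ≤ 1 ∧ ‖x - y ^ p‖ ≤ ‖(p : K)‖)

/-- A perfectoid `K`-algebra: a Banach `K`-algebra (completeness imposed separately)
such that the set `R°` of power-bounded elements is open and bounded, and Frobenius is
surjective on `R°/ϖ`. -/
def IsPerfectoidAlgebra (K : Type*) (R : Type*) [NontriviallyNormedField K]
    [NormedCommRing R] [NormedAlgebra K R] (p : ℕ) (ϖ : K) : Prop :=
  IsOpen {x : R | PowerBounded x} ∧
  (∃ C : ℝ, ∀ x : R, PowerBounded x → ‖x‖ ≤ C) ∧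
  (∀ x : R, PowerBounded x →
    ∃ y z : R, PowerBounded y ∧ PowerBounded z ∧ x - y ^ p = algebraMap K R ϖ * z)

/-- If the `p`-th power of `w` is power-bounded (`p > 0`), then so is `w`. -/
lemma powerBounded_of_pow {R : Type*} [NormedCommRing R] {w : R} {p : ℕ} (hp : 0 < p)
    (h : PowerBounded (w ^ p)) : PowerBounded w := by
  obtain ⟨C, hC⟩ := h
  have hC0 : 0 ≤ C := le_trans (norm_nonneg _) (hC 0)
  have hne : (Finset.range p).Nonempty := Finset.nonempty_range_iff.mpr hp.ne'
  set M : ℝ := (Finset.range p).sup' hne (fun r => ‖w ^ r‖) with hM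
  refine ⟨C * M, fun n => ?_⟩
  have hdecomp : w ^ n = (w ^ p) ^ (n / p) * w ^ (n % p) := by
    rw [← pow_mul, ← pow_add, Nat.div_add_mod]
  rw [hdecomp]
  calc ‖(w ^ p) ^ (n / p) * w ^ (n % p)‖
      ≤ ‖(w ^ p) ^ (n / p)‖ * ‖w ^ (n % p)‖ := norm_mul_le _ _
    _ ≤ C * M := by
        apply mul_le_mul (hC _) ?_ (norm_nonneg _) hC0
        exact Finset.le_sup' (fun r => ‖w ^ r‖)
          (Finset.mem_range.mpr (Nat.mod_lt _ hp))

/-- For a perfectoid `K`-algebra `R`, the Frobenius induces an isomorphism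
`R°/ϖ^{1/p} ≅ R°/ϖ`: it is surjective onto `R°/ϖ` and its kernel on `R°/ϖ^{1/p}` is
trivial (in particular Frobenius is injective on `R°/ϖ^{1/p}`). -/
theorem frobenius_iso_of_perfectoid
    (K : Type*) [NontriviallyNormedField K] [CompleteSpace K]
    (p : ℕ) (hp : p.Prime) (hK : IsPerfectoidNormedField K p)
    (R : Type*) [NormedCommRing R] [NormedAlgebra K R] [CompleteSpace R] [IsUltrametricDist R]
    (ϖ ϖ₁ : K) (hϖ0 : ϖ ≠ 0) (hϖp : ‖(p : K)‖ ≤ ‖ϖ‖) (hϖ1 : ‖ϖ‖ < 1) (hϖroot : ϖ₁ ^ p = ϖ)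
    (hR : IsPerfectoidAlgebra K R p ϖ) :
    (∀ x : R, PowerBounded x →
        ∃ y z : R, PowerBounded y ∧ PowerBounded z ∧ x - y ^ p = algebraMap K R ϖ * z) ∧
    (∀ x : R, PowerBounded x → (∃ z : R, PowerBounded z ∧ x ^ p = algebraMap K R ϖ * z) →
        ∃ w : R, PowerBounded w ∧ x = algebraMap K R ϖ₁ * w) := by
  refine ⟨hR.2.2, ?_⟩
  rintro x hx ⟨z, hz, hxz⟩
  have hϖ₁0 : ϖ₁ ≠ 0 := by
    intro h; apply hϖ0; rw [← hϖroot, h]; exact zero_pow hp.ne_zero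
  refine ⟨algebraMap K R ϖ₁⁻¹ * x, ?_, ?_⟩
  · apply powerBounded_of_pow hp.pos
    have : (algebraMap K R ϖ₁⁻¹ * x) ^ p = z := by
      rw [mul_pow, ← map_pow, inv_pow, hϖroot, hxz, ← mul_assoc, ← map_mul,
        inv_mul_cancel₀ hϖ0, map_one, one_mul]
    rw [this]; exact hz
  · rw [← mul_assoc, ← map_mul, mul_inv_cancel₀ hϖ₁0, map_one, one_mul]
end

section
/- Let K be a perfectoid field and (R, R⁺) a perfectoid affinoid K-algebra with tilt (R^♭, R^{♭+}). Then the map x ↦ x^♭, where |f(x^♭)| = |f^♯(x)| for f ∈ R^♭, sends continuous valuations on R that are ≤ 1 on R⁺ to continuous valuations on R^♭ that are ≤ 1 on R^{♭+}; in particular for any valuation |·| on R and x, y ∈ R^♭ one has |x^♯ + y^♯ − (x+y)^♯| ≤ max(|x^♯|, |y^♯|), so f ↦ |f^♯| satisfies the ultrametric inequality. -/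
/-- A valuation on a topological ring is continuous if `{x | w x < γ}` is open for every
`γ` in the value group. -/
def IsContinuousValuation {F : Type*} [Ring F] [TopologicalSpace F] {Γ : Type*}
    [LinearOrderedCommGroupWithZero Γ] (w : Valuation F Γ) : Prop :=
  ∀ γ : Γ, IsOpen {x : F | w x < γ}

private lemma tilt_aux_root_iter_pow {Rb : Type*} [CommMonoid Rb] (p : ℕ) (root : Rb → Rb)
    (hroot : ∀ x, root x ^ p = x) : ∀ (n : ℕ) (x : Rb), (root^[n] x) ^ p ^ n = x := by
  intro n
  induction n with
  | zero => simp
  | succ n ih =>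
    intro x
    rw [Function.iterate_succ_apply', pow_succ', pow_mul, hroot]
    exact ih x

private lemma tilt_aux_val_le_of_tendsto {R : Type*} [NormedCommRing R] {Γ : Type*}
    [LinearOrderedCommGroupWithZero Γ] (w : Valuation R Γ)
    (hw : IsContinuousValuation w) {c : ℕ → R} {z : R}
    (hc : Filter.Tendsto c Filter.atTop (nhds z))
    {M : Γ} (hM : ∀ n, w (c n) ≤ M) : w z ≤ M := by
  rcases eq_or_ne (w z) 0 with h0 | h0
  · rw [h0]; exact zero_le'
  · have hzpos : (0 : Γ) < w z := lt_of_le_of_ne zero_le' (Ne.symm h0)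
    have h0mem : (0 : R) ∈ {x : R | w x < w z} := by simpa using hzpos
    have htend : Filter.Tendsto (fun n => c n - z) Filter.atTop (nhds 0) := by
      simpa using hc.sub (tendsto_const_nhds (x := z))
    have hev : ∀ᶠ n in Filter.atTop, w (c n - z) < w z :=
      htend.eventually ((hw (w z)).eventually_mem h0mem)
    rcases hev.exists with ⟨n, hn⟩
    have h2 : w z ≤ max (w (c n)) (w (c n - z)) := by
      have := w.map_sub (c n) (c n - z)
      simpa using this
    rcases le_max_iff.mp h2 with h | h
    · exact h.trans (hM n)
    · exact absurd hn (not_lt_of_ge h)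

/-- Let `(R, R⁺)` be a perfectoid affinoid `K`-algebra with tilt `(R^♭, R^{♭+})` (the
tilt encoded abstractly via the multiplicative projection `sharp : R^♭ → R` with `p`-th
roots and the limit formula for addition).  Then `x ↦ x^♭`, `|f(x^♭)| = |f^♯(x)|`, sends
continuous valuations on `R` which are `≤ 1` on `R⁺` to continuous valuations on `R^♭`
which are `≤ 1` on `R^{♭+}`; in particular, for any such valuation `w` and `x, y ∈ R^♭`
one has `w (x^♯ + y^♯ - (x+y)^♯) ≤ max (w x^♯) (w y^♯)`, so `f ↦ w (f^♯)` satisfies the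
ultrametric inequality. -/
theorem tilt_valuation_perfectoid_affinoid
    (K : Type u) [NontriviallyNormedField K] [CompleteSpace K]
    (p : ℕ) (hp : p.Prime) (hK : IsPerfectoidNormedField K p)
    (Kb : Type u) [NontriviallyNormedField Kb] [CompleteSpace Kb] [CharP Kb p]
    (hKb : IsPerfectoidNormedField Kb p)
    (R : Type u) [NormedCommRing R] [NormedAlgebra K R] [CompleteSpace R]
    [IsUltrametricDist R]
    (ϖ : K) (hϖ0 : ϖ ≠ 0) (hϖp : ‖(p : K)‖ ≤ ‖ϖ‖) (hϖ1 : ‖ϖ‖ < 1)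
    (hR : IsPerfectoidAlgebra K R p ϖ)
    (Rb : Type u) [NormedCommRing Rb] [NormedAlgebra Kb Rb] [CompleteSpace Rb]
    [IsUltrametricDist Rb]
    (ϖb : Kb) (hϖb0 : ϖb ≠ 0) (hϖb1 : ‖ϖb‖ < 1)
    (hRb : IsPerfectoidAlgebra Kb Rb p ϖb)
    (sharp : Rb →*₀ R) (hnorm : ∀ x : Rb, ‖sharp x‖ = ‖x‖)
    (root : Rb → Rb) (hroot : ∀ x, root x ^ p = x)
    (hlim : ∀ x y : Rb, Filter.Tendsto
        (fun n => (sharp (root^[n] x) + sharp (root^[n] y)) ^ p ^ n)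
        Filter.atTop (nhds (sharp (x + y))))
    (Rplus : Subring R) (hRpOpen : IsOpen (Rplus : Set R))
    (hRpBdd : ∀ x ∈ Rplus, PowerBounded x)
    (hRpIC : ∀ x : R, (∃ f : Polynomial Rplus, f.Monic ∧ Polynomial.aeval x f = 0) →
      x ∈ Rplus)
    (Rbplus : Subring Rb) (hRbpOpen : IsOpen (Rbplus : Set Rb))
    (hRbpBdd : ∀ x ∈ Rbplus, PowerBounded x)
    (hRbpIC : ∀ x : Rb, (∃ f : Polynomial Rbplus, f.Monic ∧ Polynomial.aeval x f = 0) →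
      x ∈ Rbplus)
    (hplus : ∀ x ∈ Rbplus, sharp x ∈ Rplus)
    (Γ : Type u) [LinearOrderedCommGroupWithZero Γ] :
    ∀ w : Valuation R Γ, IsContinuousValuation w → (∀ a ∈ Rplus, w a ≤ 1) →
      ((∃ wb : Valuation Rb Γ, (∀ x, wb x = w (sharp x)) ∧ IsContinuousValuation wb ∧
          ∀ b ∈ Rbplus, wb b ≤ 1) ∧
       (∀ x y : Rb, w (sharp x + sharp y - sharp (x + y)) ≤
          max (w (sharp x)) (w (sharp y)))) := by
  intro w hw hw1
  -- the key ultrametric inequality for `fun x => w (sharp x)`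
  have key : ∀ x y : Rb, w (sharp (x + y)) ≤ max (w (sharp x)) (w (sharp y)) := by
    intro x y
    refine tilt_aux_val_le_of_tendsto w hw (hlim x y) (fun n => ?_)
    have hxn : sharp (root^[n] x) ^ p ^ n = sharp x := by
      rw [← map_pow, tilt_aux_root_iter_pow p root hroot n x]
    have hyn : sharp (root^[n] y) ^ p ^ n = sharp y := by
      rw [← map_pow, tilt_aux_root_iter_pow p root hroot n y]
    have hmono : Monotone (fun a : Γ => a ^ p ^ n) := fun a b h => pow_le_pow_left' h _
    calc w ((sharp (root^[n] x) + sharp (root^[n] y)) ^ p ^ n)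
        = w (sharp (root^[n] x) + sharp (root^[n] y)) ^ p ^ n := map_pow w _ _
      _ ≤ (max (w (sharp (root^[n] x))) (w (sharp (root^[n] y)))) ^ p ^ n :=
          pow_le_pow_left' (w.map_add _ _) _
      _ = max (w (sharp (root^[n] x)) ^ p ^ n) (w (sharp (root^[n] y)) ^ p ^ n) :=
          hmono.map_max
      _ = max (w (sharp x)) (w (sharp y)) := by
          rw [← map_pow w, ← map_pow w, hxn, hyn]
  -- the tilted valuation
  refine ⟨⟨{ toFun := fun x => w (sharp x)
             map_zero' := by simp
             map_one' := by simp
             map_mul' := fun a b => by simp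
             map_add_le_max' := fun a b => key a b }, fun x => rfl, ?_, ?_⟩, ?_⟩
  · -- continuity
    intro γ
    rw [Metric.isOpen_iff]
    intro x hx
    have hx' : w (sharp x) < γ := hx
    have h0mem : (0 : R) ∈ {u : R | w u < γ} := by
      simpa using lt_of_le_of_lt (zero_le' (a := w (sharp x))) hx'
    rcases Metric.isOpen_iff.mp (hw γ) 0 h0mem with ⟨ε, hε, hball⟩
    refine ⟨ε, hε, fun y hy => ?_⟩
    have hdist : dist (sharp (y - x)) (0 : R) < ε := by
      rw [dist_zero_right, hnorm, ← dist_eq_norm]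
      exact hy
    have hsmall : w (sharp (y - x)) < γ := hball hdist
    have : w (sharp ((y - x) + x)) ≤ max (w (sharp (y - x))) (w (sharp x)) := key _ _
    have h := lt_of_le_of_lt this (max_lt hsmall hx')
    rwa [sub_add_cancel] at h
  · -- bounded by 1 on Rbplus
    intro b hb
    exact hw1 (sharp b) (hplus b hb)
  · -- the ultrametric inequality
    intro x y
    refine le_trans (w.map_sub _ _) (max_le (w.map_add _ _) (key x y))
end

section
/- Let K be a perfectoid field and let R, R^♭ be a perfectoid K-algebra and its tilt. Then R is a perfectoid field if and only if R^♭ is a perfectoid field. In particular, the spectral norm ||x||_R = inf{|t|^{-1} : t ∈ K^×, tx ∈ R°} satisfies ||x||_{R^♭} = ||x^♯||_R for x ∈ R^♭, and multiplicativity of one spectral norm implies multiplicativity of the other. -/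
/-- The spectral norm `‖x‖_R = inf {‖t‖⁻¹ : t ∈ K^×, t x ∈ R°}` on a `K`-algebra `R`. -/
noncomputable def spectralNrm (K : Type u) (R : Type v) [NontriviallyNormedField K]
    [NormedCommRing R] [NormedAlgebra K R] (x : R) : ℝ :=
  sInf {r : ℝ | ∃ t : K, t ≠ 0 ∧ r = ‖t‖⁻¹ ∧ PowerBounded (algebraMap K R t * x)}

open Filter Topology

noncomputable def smoothNorm {R : Type*} [SeminormedRing R] (x : R) : ℝ :=
  ⨅ n : ℕ, ‖x ^ (n + 1)‖ ^ (((n + 1 : ℕ) : ℝ)⁻¹)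

section SeminormedRing

variable {R : Type*} [SeminormedRing R]

lemma bddBelow_range_norm_pow_rpow (x : R) :
    BddBelow (Set.range fun n : ℕ => ‖x ^ (n + 1)‖ ^ (((n + 1 : ℕ) : ℝ)⁻¹)) :=
  ⟨0, by rintro _ ⟨n, rfl⟩; positivity⟩

lemma smoothNorm_nonneg (x : R) : 0 ≤ smoothNorm x :=
  Real.iInf_nonneg fun _ => by positivity

lemma pow_smoothNorm_le_norm_pow (x : R) {m : ℕ} (hm : m ≠ 0) : smoothNorm x ^ m ≤ ‖x ^ m‖ := by
  obtain ⟨n, rfl⟩ := Nat.exists_eq_succ_of_ne_zero hm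
  calc smoothNorm x ^ (n + 1) ≤ (‖x ^ (n + 1)‖ ^ (((n + 1 : ℕ) : ℝ)⁻¹)) ^ (n + 1) :=
        pow_le_pow_left₀ (smoothNorm_nonneg x) (ciInf_le (bddBelow_range_norm_pow_rpow x) n) _
    _ = ‖x ^ (n + 1)‖ := Real.rpow_inv_natCast_pow (norm_nonneg _) n.succ_ne_zero

lemma smoothNorm_le_of_norm_pow_le {x : R} {c : ℝ} (hc : 0 ≤ c) {m : ℕ} (hm : m ≠ 0)
    (h : ‖x ^ m‖ ≤ c ^ m) : smoothNorm x ≤ c := by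
  obtain ⟨n, rfl⟩ := Nat.exists_eq_succ_of_ne_zero hm
  calc smoothNorm x ≤ ‖x ^ (n + 1)‖ ^ (((n + 1 : ℕ) : ℝ)⁻¹) :=
        ciInf_le (bddBelow_range_norm_pow_rpow x) n
    _ ≤ (c ^ (n + 1)) ^ (((n + 1 : ℕ) : ℝ)⁻¹) := by gcongr
    _ = c := Real.pow_rpow_inv_natCast hc n.succ_ne_zero

lemma exists_norm_pow_lt_of_smoothNorm_lt {x : R} {c : ℝ} (h : smoothNorm x < c) :
    ∃ m : ℕ, m ≠ 0 ∧ ‖x ^ m‖ < c ^ m := by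
  obtain ⟨n, hn⟩ := exists_lt_of_ciInf_lt h
  refine ⟨n + 1, n.succ_ne_zero, ?_⟩
  calc ‖x ^ (n + 1)‖ = (‖x ^ (n + 1)‖ ^ (((n + 1 : ℕ) : ℝ)⁻¹)) ^ (n + 1) :=
        (Real.rpow_inv_natCast_pow (norm_nonneg _) n.succ_ne_zero).symm
    _ < c ^ (n + 1) := pow_lt_pow_left₀ hn (by positivity) n.succ_ne_zero

lemma smoothNorm_le_norm (x : R) : smoothNorm x ≤ ‖x‖ :=
  smoothNorm_le_of_norm_pow_le (norm_nonneg x) one_ne_zero (by simp)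

@[simp]
lemma smoothNorm_zero : smoothNorm (0 : R) = 0 :=
  le_antisymm ((smoothNorm_le_norm 0).trans_eq norm_zero) (smoothNorm_nonneg 0)

lemma smoothNorm_neg (x : R) : smoothNorm (-x) = smoothNorm x := by
  simp only [smoothNorm]
  congr! 3 with n
  rw [neg_pow]
  rcases neg_one_pow_eq_or R (n + 1) with h | h <;> simp [h]

lemma smoothNorm_sub_comm (x y : R) : smoothNorm (x - y) = smoothNorm (y - x) := by
  rw [← smoothNorm_neg, neg_sub]

lemma smoothNorm_map {S F : Type*} [SeminormedRing S] [FunLike F R S] [MonoidHomClass F R S]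
    (f : F) (hf : ∀ x, ‖f x‖ = ‖x‖) (x : R) : smoothNorm (f x) = smoothNorm x := by
  simp only [smoothNorm, ← map_pow, hf]

lemma powerBounded_of_smoothNorm_lt_one {x : R} (h : smoothNorm x < 1) : PowerBounded x := by
  obtain ⟨m, hm, hxm⟩ := exists_norm_pow_lt_of_smoothNorm_lt h
  rw [one_pow] at hxm
  refine ⟨(Finset.range m).sup' (by simpa using hm) (fun r => ‖x ^ r‖), fun n => ?_⟩
  induction n using Nat.strong_induction_on with
  | _ n ih =>
    rcases lt_or_ge n m with hnm | hnm
    · exact Finset.le_sup' (fun r => ‖x ^ r‖) (Finset.mem_range.mpr hnm)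
    · calc ‖x ^ n‖ = ‖x ^ m * x ^ (n - m)‖ := by rw [← pow_add, Nat.add_sub_cancel' hnm]
        _ ≤ 1 * ‖x ^ (n - m)‖ := (norm_mul_le _ _).trans (by gcongr)
        _ ≤ _ := by rw [one_mul]; exact ih _ (by omega)

lemma smoothNorm_le_one_of_powerBounded {x : R} (h : PowerBounded x) : smoothNorm x ≤ 1 := by
  by_contra! hlt
  obtain ⟨C, hC⟩ := h
  obtain ⟨n, hn, hn1⟩ := ((tendsto_pow_atTop_atTop_of_one_lt hlt).eventually_gt_atTop C).and
    (eventually_ge_atTop 1) |>.exists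
  exact hn.not_ge ((pow_smoothNorm_le_norm_pow x (by omega)).trans (hC n))

lemma pow_smoothNorm_le_smoothNorm_pow (x : R) {m : ℕ} (hm : m ≠ 0) :
    smoothNorm x ^ m ≤ smoothNorm (x ^ m) := by
  refine le_ciInf fun n => ?_
  calc smoothNorm x ^ m = ((smoothNorm x ^ m) ^ (n + 1)) ^ (((n + 1 : ℕ) : ℝ)⁻¹) :=
        (Real.pow_rpow_inv_natCast (pow_nonneg (smoothNorm_nonneg x) m) n.succ_ne_zero).symm
    _ ≤ ‖(x ^ m) ^ (n + 1)‖ ^ (((n + 1 : ℕ) : ℝ)⁻¹) := by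
        rw [← pow_mul, ← pow_mul]
        gcongr
        · exact pow_nonneg (smoothNorm_nonneg x) _
        · exact pow_smoothNorm_le_norm_pow x (by positivity)

lemma smoothNorm_one_le : smoothNorm (1 : R) ≤ 1 :=
  smoothNorm_le_one_of_powerBounded ⟨‖(1 : R)‖, fun n => by rw [one_pow]⟩

end SeminormedRing

lemma smoothNorm_one {R : Type*} [NormedRing R] [Nontrivial R] : smoothNorm (1 : R) = 1 := by
  refine le_antisymm smoothNorm_one_le ?_
  refine le_ciInf fun n => ?_
  rw [one_pow]
  exact Real.one_le_rpow (one_le_norm_one R) (by positivity)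

lemma isUnit_of_smoothNorm_one_sub_lt_one {R : Type*} [NormedCommRing R] [CompleteSpace R]
    {u : R} (h : smoothNorm (1 - u) < 1) : IsUnit u := by
  obtain ⟨m, -, hm⟩ := exists_norm_pow_lt_of_smoothNorm_lt h
  rw [one_pow] at hm
  have hgeom : u * ∑ i ∈ Finset.range m, (1 - u) ^ i = 1 - (1 - u) ^ m := by
    linear_combination -geom_sum_mul (1 - u) m
  have hunit := (Units.oneSub _ hm).isUnit
  rw [Units.val_oneSub, ← hgeom] at hunit
  exact isUnit_of_mul_isUnit_left hunit

section SeminormedCommRing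

variable {R : Type*} [SeminormedCommRing R]

lemma PowerBounded.mul {u v : R} (hu : PowerBounded u) (hv : PowerBounded v) :
    PowerBounded (u * v) := by
  obtain ⟨C, hC⟩ := hu
  obtain ⟨D, hD⟩ := hv
  refine ⟨C * D, fun n => ?_⟩
  rw [mul_pow]
  exact (norm_mul_le _ _).trans
    (mul_le_mul (hC n) (hD n) (norm_nonneg _) ((norm_nonneg _).trans (hC 0)))

lemma PowerBounded.add [IsUltrametricDist R] {u v : R} (hu : PowerBounded u)
    (hv : PowerBounded v) : PowerBounded (u + v) := by
  obtain ⟨C, hC⟩ := hu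
  obtain ⟨D, hD⟩ := hv
  have hC0 : 0 ≤ C := (norm_nonneg _).trans (hC 0)
  refine ⟨C * D, fun n => ?_⟩
  rw [add_pow]
  refine IsUltrametricDist.norm_sum_le_of_forall_le_of_nonneg
    (mul_nonneg hC0 ((norm_nonneg _).trans (hD 0))) fun k _ => ?_
  rw [mul_comm, ← nsmul_eq_mul]
  exact (IsUltrametricDist.norm_nsmul_le _ _).trans
    ((norm_mul_le _ _).trans (mul_le_mul (hC k) (hD _) (norm_nonneg _) hC0))

end SeminormedCommRing

section NormedAlgebra

variable {K R : Type*} [NormedField K] [SeminormedRing R] [NormedAlgebra K R]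

lemma smoothNorm_smul (t : K) (x : R) : smoothNorm (t • x) = ‖t‖ * smoothNorm x := by
  simp only [smoothNorm, smul_pow, norm_smul, norm_pow]
  rw [Real.mul_iInf_of_nonneg (norm_nonneg t)]
  congr! 2 with n
  rw [Real.mul_rpow (by positivity) (norm_nonneg _),
    Real.pow_rpow_inv_natCast (norm_nonneg t) n.succ_ne_zero]

lemma powerBounded_inv_smul_of_smoothNorm_lt {x : R} {t : K} (h : smoothNorm x < ‖t‖) :
    PowerBounded (t⁻¹ • x) := by
  refine powerBounded_of_smoothNorm_lt_one ?_
  rwa [smoothNorm_smul, norm_inv, inv_mul_lt_one₀ ((smoothNorm_nonneg x).trans_lt h)]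

lemma smoothNorm_le_norm_of_powerBounded_inv_smul {x : R} {t : K} (ht : t ≠ 0)
    (h : PowerBounded (t⁻¹ • x)) : smoothNorm x ≤ ‖t‖ := by
  have h1 := smoothNorm_le_one_of_powerBounded h
  rwa [smoothNorm_smul, norm_inv, inv_mul_le_one₀ (norm_pos_iff.mpr ht)] at h1

end NormedAlgebra

lemma smoothNorm_pos (K : Type*) {R : Type*} [NontriviallyNormedField K] [NormedRing R]
    [NormedAlgebra K R] (hbdd : ∃ C : ℝ, ∀ y : R, PowerBounded y → ‖y‖ ≤ C) {x : R}
    (hx : x ≠ 0) : 0 < smoothNorm x := by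
  obtain ⟨C, hC⟩ := hbdd
  refine (smoothNorm_nonneg x).lt_of_ne fun h0 => ?_
  obtain ⟨t, ht⟩ := NormedField.exists_lt_norm K (C / ‖x‖)
  have hpb : PowerBounded (t • x) :=
    powerBounded_of_smoothNorm_lt_one (by rw [smoothNorm_smul, ← h0, mul_zero]; exact one_pos)
  have hle := hC _ hpb
  rw [norm_smul] at hle
  rw [div_lt_iff₀ (norm_pos_iff.mpr hx)] at ht
  linarith

lemma exists_norm_mem_Ioo_of_not_discrete {K : Type*} [NormedField K]
    (h : ¬ ∃ γ : ℝ, ∀ x : K, x ≠ 0 → ∃ n : ℤ, ‖x‖ = γ ^ n) {a b : ℝ} (ha : 0 < a) (hab : a < b) :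
    ∃ t : K, a < ‖t‖ ∧ ‖t‖ < b := by
  let S : AddSubgroup ℝ :=
    { carrier := {r | ∃ t : K, t ≠ 0 ∧ Real.log ‖t‖ = r}
      zero_mem' := ⟨1, one_ne_zero, by simp⟩
      add_mem' := by
        rintro _ _ ⟨t, ht, rfl⟩ ⟨u, hu, rfl⟩
        exact ⟨t * u, mul_ne_zero ht hu, by
          rw [norm_mul, Real.log_mul (norm_ne_zero_iff.mpr ht) (norm_ne_zero_iff.mpr hu)]⟩
      neg_mem' := by
        rintro _ ⟨t, ht, rfl⟩
        exact ⟨t⁻¹, inv_ne_zero ht, by rw [norm_inv, Real.log_inv]⟩ }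
  rcases S.dense_or_cyclic with hdense | ⟨g, hg⟩
  · obtain ⟨_, ⟨t, ht, rfl⟩, hlog⟩ := hdense.exists_mem_open isOpen_Ioo
      (Set.nonempty_Ioo.mpr (Real.log_lt_log ha hab))
    have htpos : 0 < ‖t‖ := norm_pos_iff.mpr ht
    exact ⟨t, (Real.log_lt_log_iff ha htpos).mp hlog.1,
      (Real.log_lt_log_iff htpos (ha.trans hab)).mp hlog.2⟩
  · refine absurd ⟨Real.exp g, fun x hx => ?_⟩ h
    have hmem : Real.log ‖x‖ ∈ S := ⟨x, hx, rfl⟩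
    rw [hg, AddSubgroup.mem_closure_singleton] at hmem
    obtain ⟨n, hn⟩ := hmem
    refine ⟨n, ?_⟩
    rw [← Real.exp_log (norm_pos_iff.mpr hx), ← hn, zsmul_eq_mul, mul_comm, Real.exp_mul,
      Real.rpow_intCast]

abbrev DenselyNormedField.ofNotDiscrete {K : Type*} [NormedField K]
    (h : ¬ ∃ γ : ℝ, ∀ x : K, x ≠ 0 → ∃ n : ℤ, ‖x‖ = γ ^ n) : DenselyNormedField K where
  lt_norm_lt x y hx hxy :=
    let ⟨t, ht1, ht2⟩ := exists_norm_mem_Ioo_of_not_discrete h (a := (x + y) / 2)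
      (by linarith) (by linarith)
    ⟨t, by linarith, ht2⟩

section DenselyNormedField

variable {K R : Type*} [DenselyNormedField K]

lemma spectralNrm_eq_smoothNorm [NormedCommRing R] [NormedAlgebra K R] (x : R) :
    spectralNrm K R x = smoothNorm x := by
  have happrox : ∀ w, smoothNorm x < w → ∃ r ∈ {r : ℝ | ∃ t : K, t ≠ 0 ∧ r = ‖t‖⁻¹ ∧
      PowerBounded (algebraMap K R t * x)}, r < w := by
    intro w hw
    obtain ⟨s, hs1, hs2⟩ := NormedField.exists_lt_norm_lt K (smoothNorm_nonneg x) hw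
    have hs0 : s ≠ 0 := norm_pos_iff.mp ((smoothNorm_nonneg x).trans_lt hs1)
    refine ⟨‖s⁻¹‖⁻¹, ⟨s⁻¹, inv_ne_zero hs0, rfl, ?_⟩, by rwa [norm_inv, inv_inv]⟩
    rw [← Algebra.smul_def]
    exact powerBounded_inv_smul_of_smoothNorm_lt hs1
  obtain ⟨r, hr, -⟩ := happrox _ (lt_add_one _)
  refine csInf_eq_of_forall_ge_of_forall_gt_exists_lt ⟨r, hr⟩ ?_ happrox
  rintro _ ⟨t, ht, rfl, hpb⟩
  rw [← Algebra.smul_def, ← inv_inv t] at hpb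
  simpa using smoothNorm_le_norm_of_powerBounded_inv_smul (inv_ne_zero ht) hpb

lemma exists_smoothNorm_smul_mem_Ioo [SeminormedRing R] [NormedAlgebra K R] {x : R}
    (hx : 0 < smoothNorm x) {a b : ℝ} (ha : 0 ≤ a) (hab : a < b) :
    ∃ σ : K, σ ≠ 0 ∧ a < smoothNorm (σ • x) ∧ smoothNorm (σ • x) < b := by
  obtain ⟨σ, h1, h2⟩ := NormedField.exists_lt_norm_lt K (div_nonneg ha hx.le)
    (div_lt_div_of_pos_right hab hx)
  refine ⟨σ, norm_pos_iff.mp ((div_nonneg ha hx.le).trans_lt h1), ?_, ?_⟩ <;> rw [smoothNorm_smul]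
  · exact (div_lt_iff₀ hx).mp h1
  · exact (lt_div_iff₀ hx).mp h2

end DenselyNormedField

lemma smoothNorm_mul_le (K : Type*) {R : Type*} [DenselyNormedField K] [NormedCommRing R]
    [NormedAlgebra K R] (x y : R) : smoothNorm (x * y) ≤ smoothNorm x * smoothNorm y := by
  refine le_mul_of_forall_lt₀ fun s hs u hu => ?_
  obtain ⟨σ, hσ1, hσ2⟩ := NormedField.exists_lt_norm_lt K (smoothNorm_nonneg x) hs
  obtain ⟨τ, hτ1, hτ2⟩ := NormedField.exists_lt_norm_lt K (smoothNorm_nonneg y) hu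
  have hσ0 : σ ≠ 0 := norm_pos_iff.mp ((smoothNorm_nonneg x).trans_lt hσ1)
  have hτ0 : τ ≠ 0 := norm_pos_iff.mp ((smoothNorm_nonneg y).trans_lt hτ1)
  have hpb : PowerBounded ((σ * τ)⁻¹ • (x * y)) := by
    rw [mul_inv, ← smul_mul_smul_comm]
    exact (powerBounded_inv_smul_of_smoothNorm_lt hσ1).mul
      (powerBounded_inv_smul_of_smoothNorm_lt hτ1)
  calc smoothNorm (x * y) ≤ ‖σ * τ‖ :=
        smoothNorm_le_norm_of_powerBounded_inv_smul (mul_ne_zero hσ0 hτ0) hpb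
    _ ≤ s * u := by
        rw [norm_mul]
        exact mul_le_mul hσ2.le hτ2.le (norm_nonneg _) ((smoothNorm_nonneg x).trans hs.le)

lemma smoothNorm_pow_le (K : Type*) {R : Type*} [DenselyNormedField K] [NormedCommRing R]
    [NormedAlgebra K R] (x : R) (m : ℕ) : smoothNorm (x ^ m) ≤ smoothNorm x ^ m := by
  induction m with
  | zero => simpa using smoothNorm_one_le
  | succ m ih =>
    rw [pow_succ, pow_succ]
    exact (smoothNorm_mul_le K _ _).trans (by gcongr; exact smoothNorm_nonneg _)

section Ultrametric

variable {R : Type*} [NormedCommRing R] [IsUltrametricDist R]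

lemma smoothNorm_add_le_max (K : Type*) [DenselyNormedField K] [NormedAlgebra K R]
    (x y : R) : smoothNorm (x + y) ≤ max (smoothNorm x) (smoothNorm y) := by
  refine le_of_forall_gt_imp_ge_of_dense fun c hc => ?_
  obtain ⟨t, ht1, ht2⟩ := NormedField.exists_lt_norm_lt K
    ((smoothNorm_nonneg x).trans (le_max_left _ _)) hc
  have ht0 : t ≠ 0 := norm_pos_iff.mp ((smoothNorm_nonneg x).trans_lt
    ((le_max_left _ _).trans_lt ht1))
  have hpb : PowerBounded (t⁻¹ • (x + y)) := by
    rw [smul_add]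
    exact (powerBounded_inv_smul_of_smoothNorm_lt ((le_max_left _ _).trans_lt ht1)).add
      (powerBounded_inv_smul_of_smoothNorm_lt ((le_max_right _ _).trans_lt ht1))
  exact (smoothNorm_le_norm_of_powerBounded_inv_smul ht0 hpb).trans ht2.le

lemma smoothNorm_sum_le (K : Type*) [DenselyNormedField K] [NormedAlgebra K R]
    {ι : Type*} (s : Finset ι) (f : ι → R) {M : ℝ} (hM : 0 ≤ M)
    (h : ∀ i ∈ s, smoothNorm (f i) ≤ M) : smoothNorm (∑ i ∈ s, f i) ≤ M := by
  classical
  induction s using Finset.induction_on with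
  | empty => simpa using hM
  | insert a s ha ih =>
    rw [Finset.sum_insert ha]
    exact (smoothNorm_add_le_max K _ _).trans (max_le (h a (Finset.mem_insert_self a s))
      (ih fun i hi => h i (Finset.mem_insert_of_mem hi)))

lemma continuous_smoothNorm (K : Type*) [DenselyNormedField K] [NormedAlgebra K R] :
    Continuous (smoothNorm : R → ℝ) := by
  refine (LipschitzWith.of_le_add fun x y => ?_).continuous
  calc smoothNorm x = smoothNorm (y + (x - y)) := by rw [add_sub_cancel]
    _ ≤ max (smoothNorm y) (smoothNorm (x - y)) := smoothNorm_add_le_max K _ _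
    _ ≤ smoothNorm y + dist x y := by
      rw [dist_eq_norm]
      exact max_le (le_add_of_nonneg_right (norm_nonneg _))
        ((smoothNorm_le_norm _).trans (le_add_of_nonneg_left (smoothNorm_nonneg y)))

lemma smoothNorm_eq_of_smoothNorm_sub_lt (K : Type*) [DenselyNormedField K] [NormedAlgebra K R]
    {x y : R} (h : smoothNorm (x - y) < smoothNorm x) : smoothNorm y = smoothNorm x := by
  have hy : smoothNorm y ≤ max (smoothNorm x) (smoothNorm (x - y)) := by
    simpa [smoothNorm_sub_comm y x] using smoothNorm_add_le_max K x (y - x)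
  have hx : smoothNorm x ≤ max (smoothNorm y) (smoothNorm (x - y)) := by
    simpa using smoothNorm_add_le_max K y (x - y)
  exact le_antisymm (hy.trans (max_le le_rfl h.le)) ((le_max_iff.mp hx).resolve_right h.not_ge)

lemma smoothNorm_le_of_smoothNorm_sub_sub_le (K : Type*) [DenselyNormedField K]
    [NormedAlgebra K R] {q δ : ℝ} (hq : q < 1) {a b e : R}
    (hadd : smoothNorm (a - e - b) ≤ q * max (smoothNorm e) (smoothNorm b))
    (hb : smoothNorm (b - a) ≤ δ) (hδ : δ < smoothNorm a) :
    smoothNorm e ≤ max (q * smoothNorm a) δ := by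
  have hba : smoothNorm b = smoothNorm a := smoothNorm_eq_of_smoothNorm_sub_lt K
    (by rw [smoothNorm_sub_comm]; exact hb.trans_lt hδ)
  have he : smoothNorm e ≤ max (q * max (smoothNorm e) (smoothNorm a)) δ :=
    calc smoothNorm e = smoothNorm (-(a - e - b) + -(b - a)) := by congr 1; ring
      _ ≤ max (smoothNorm (a - e - b)) (smoothNorm (b - a)) := by
          simpa only [smoothNorm_neg] using smoothNorm_add_le_max K (-(a - e - b)) (-(b - a))
      _ ≤ _ := by rw [← hba]; exact max_le_max hadd hb
  rcases le_total (smoothNorm e) (smoothNorm a) with hea | hae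
  · rwa [max_eq_right hea] at he
  · have hδe : δ < smoothNorm e := hδ.trans_le hae
    have he0 : 0 < smoothNorm e := ((smoothNorm_nonneg _).trans hb).trans_lt hδe
    rw [max_eq_left hae] at he
    exact absurd he (max_lt (mul_lt_of_lt_one_left he0 hq) hδe).not_ge

end Ultrametric

lemma smoothNorm_natCast_mul (K : Type*) {R : Type*} [NormedField K] [SeminormedRing R]
    [NormedAlgebra K R] (c : ℕ) (z : R) :
    smoothNorm ((c : R) * z) = ‖(c : K)‖ * smoothNorm z := by
  rw [← smoothNorm_smul, Nat.cast_smul_eq_nsmul, nsmul_eq_mul]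

section Frobenius

variable (K : Type*) {R : Type*} [DenselyNormedField K] [IsUltrametricDist K] [NormedCommRing R]
  [NormedAlgebra K R] [IsUltrametricDist R]

lemma smoothNorm_add_pow_prime_pow_sub_le {p : ℕ} (hp : p.Prime)
    (A B : R) (n : ℕ) :
    smoothNorm ((A + B) ^ p ^ n - A ^ p ^ n - B ^ p ^ n)
      ≤ ‖(p : K)‖ * max (smoothNorm A) (smoothNorm B) ^ p ^ n := by
  set M := max (smoothNorm A) (smoothNorm B)
  have hM : 0 ≤ M := (smoothNorm_nonneg A).trans (le_max_left _ _)
  rw [add_pow_prime_pow_eq' hp, add_assoc, add_sub_cancel_left, add_sub_cancel_left,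
    smoothNorm_natCast_mul K]
  refine mul_le_mul_of_nonneg_left (smoothNorm_sum_le K _ _ (pow_nonneg hM _) fun k hk => ?_)
    (norm_nonneg _)
  have hkN := (Finset.mem_Ioo.mp hk).2
  calc smoothNorm (A ^ k * B ^ (p ^ n - k) * (((p ^ n).choose k / p : ℕ) : R))
      = ‖(((p ^ n).choose k / p : ℕ) : K)‖ * smoothNorm (A ^ k * B ^ (p ^ n - k)) := by
        rw [mul_comm, smoothNorm_natCast_mul K]
    _ ≤ 1 * (smoothNorm A ^ k * smoothNorm B ^ (p ^ n - k)) :=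
        mul_le_mul (IsUltrametricDist.norm_natCast_le_one K _) ((smoothNorm_mul_le K _ _).trans
          (mul_le_mul (smoothNorm_pow_le K _ _) (smoothNorm_pow_le K _ _) (smoothNorm_nonneg _)
            (pow_nonneg (smoothNorm_nonneg _) _))) (smoothNorm_nonneg _) zero_le_one
    _ ≤ M ^ k * M ^ (p ^ n - k) := by
        rw [one_mul]
        exact mul_le_mul (pow_le_pow_left₀ (smoothNorm_nonneg A) (le_max_left _ _) k)
          (pow_le_pow_left₀ (smoothNorm_nonneg B) (le_max_right _ _) _)
          (pow_nonneg (smoothNorm_nonneg B) _) (pow_nonneg hM _)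
    _ = M ^ p ^ n := by rw [← pow_add, Nat.add_sub_cancel' hkN.le]

lemma smoothNorm_sub_sub_le_of_tendsto {p : ℕ} (hp : p.Prime)
    {a b c : R} {A B : ℕ → R} (hA : ∀ n, A n ^ p ^ n = a) (hB : ∀ n, B n ^ p ^ n = b)
    (hc : Tendsto (fun n => (A n + B n) ^ p ^ n) atTop (𝓝 c)) :
    smoothNorm (c - a - b) ≤ ‖(p : K)‖ * max (smoothNorm a) (smoothNorm b) := by
  refine le_of_tendsto' (((continuous_smoothNorm K).tendsto _).comp
    ((hc.sub_const a).sub_const b)) fun n => ?_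
  have hpn : p ^ n ≠ 0 := pow_ne_zero _ hp.ne_zero
  have hM : max (smoothNorm (A n)) (smoothNorm (B n)) ^ p ^ n
      ≤ max (smoothNorm a) (smoothNorm b) := by
    rcases max_choice (smoothNorm (A n)) (smoothNorm (B n)) with h | h <;> rw [h]
    · exact (hA n ▸ pow_smoothNorm_le_smoothNorm_pow (A n) hpn).trans (le_max_left _ _)
    · exact (hB n ▸ pow_smoothNorm_le_smoothNorm_pow (B n) hpn).trans (le_max_right _ _)
  calc smoothNorm ((A n + B n) ^ p ^ n - a - b)
      = smoothNorm ((A n + B n) ^ p ^ n - A n ^ p ^ n - B n ^ p ^ n) := by rw [hA, hB]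
    _ ≤ _ := smoothNorm_add_pow_prime_pow_sub_le K hp _ _ n
    _ ≤ _ := mul_le_mul_of_nonneg_left hM (norm_nonneg _)

end Frobenius

lemma iterate_pow_pow_eq {M : Type*} [Monoid M] {p : ℕ} {f : M → M} (hf : ∀ x, f x ^ p = x)
    (n : ℕ) (x : M) : f^[n] x ^ p ^ n = x := by
  induction n generalizing x with
  | zero => simp
  | succ n ih => rw [Function.iterate_succ_apply, pow_succ, pow_mul, ih, hf]

section Annulus

variable {R : Type*} [NormedCommRing R]

lemma smoothNorm_mul_of_forall_mem_Ioo (K : Type*) [DenselyNormedField K] [NormedAlgebra K R]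
    {ρ : ℝ} (hρ : 0 ≤ ρ) (hρ1 : ρ < 1)
    (h : ∀ a c : R, ρ < smoothNorm a → smoothNorm a < 1 → ρ < smoothNorm c → smoothNorm c < 1 →
      smoothNorm (a * c) = smoothNorm a * smoothNorm c)
    (a c : R) : smoothNorm (a * c) = smoothNorm a * smoothNorm c := by
  rcases (smoothNorm_nonneg a).eq_or_lt with ha | ha
  · rw [← ha, zero_mul]
    exact le_antisymm ((smoothNorm_mul_le K a c).trans_eq (by rw [← ha, zero_mul]))
      (smoothNorm_nonneg _)
  rcases (smoothNorm_nonneg c).eq_or_lt with hc | hc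
  · rw [← hc, mul_zero]
    exact le_antisymm ((smoothNorm_mul_le K a c).trans_eq (by rw [← hc, mul_zero]))
      (smoothNorm_nonneg _)
  obtain ⟨σ, hσ0, hσ1, hσ2⟩ := exists_smoothNorm_smul_mem_Ioo (K := K) ha hρ hρ1
  obtain ⟨τ, hτ0, hτ1, hτ2⟩ := exists_smoothNorm_smul_mem_Ioo (K := K) hc hρ hρ1
  have hστ := h _ _ hσ1 hσ2 hτ1 hτ2
  rw [smul_mul_smul_comm, smoothNorm_smul, smoothNorm_smul, smoothNorm_smul, norm_mul] at hστ
  have hpos : 0 < ‖σ‖ * ‖τ‖ := mul_pos (norm_pos_iff.mpr hσ0) (norm_pos_iff.mpr hτ0)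
  exact mul_left_cancel₀ hpos.ne' (by linear_combination hστ)

lemma isField_of_forall_isUnit_of_mem_Ioo (K : Type*) [DenselyNormedField K] [NormedAlgebra K R]
    [Nontrivial R] (hbdd : ∃ C : ℝ, ∀ y : R, PowerBounded y → ‖y‖ ≤ C) {ρ : ℝ} (hρ : 0 ≤ ρ) (hρ1 : ρ < 1)
    (h : ∀ x : R, ρ < smoothNorm x → smoothNorm x < 1 → IsUnit x) : IsField R := by
  refine ⟨exists_pair_ne R, mul_comm, fun {x} hx => ?_⟩
  obtain ⟨σ, -, h1, h2⟩ := exists_smoothNorm_smul_mem_Ioo (K := K) (smoothNorm_pos K hbdd hx) hρ hρ1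
  have hu := h _ h1 h2
  rw [Algebra.smul_def] at hu
  exact (isUnit_of_mul_isUnit_right hu).exists_right_inv

end Annulus

section Tilt

variable {R Rb : Type*} [NormedCommRing R] [IsUltrametricDist R] [NormedCommRing Rb]

-- `z` approximates `ϖ / x^♯`, and almost-additivity of `♯` makes `ϖ♭ - x z` smaller than `ϖ♭`,
-- so `x z / ϖ♭` is a unit.
lemma isUnit_tilt_of_isField (K : Type*) {Kb : Type*} [DenselyNormedField K]
    [NormedAlgebra K R] [NormedField Kb] [NormedAlgebra Kb Rb] [CompleteSpace Rb]
    (sharp : Rb →*₀ R) (hnorm : ∀ x, ‖sharp x‖ = ‖x‖) {q : ℝ} (hq : q < 1)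
    (hadd : ∀ u v, smoothNorm (sharp (u + v) - sharp u - sharp v)
      ≤ q * max (smoothNorm (sharp u)) (smoothNorm (sharp v)))
    {ϖ : K} {ϖb : Kb} (hϖb0 : ϖb ≠ 0) (hϖ : ‖ϖb‖ = ‖ϖ‖)
    (hsharpϖ : sharp (algebraMap Kb Rb ϖb) = algebraMap K R ϖ)
    (hsurj : ∀ a : R, PowerBounded a → ∃ x : Rb, ‖a - sharp x‖ ≤ ‖ϖ‖)
    (hR : IsField R) (hmul : ∀ a b : R, smoothNorm (a * b) = smoothNorm a * smoothNorm b)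
    {x : Rb} (hx1 : ‖ϖ‖ < smoothNorm x) (hx2 : smoothNorm x < 1) : IsUnit x := by
  have := hR.nontrivial
  have hrad := smoothNorm_map sharp hnorm
  have hϖpos : 0 < ‖ϖ‖ := hϖ ▸ norm_pos_iff.mpr hϖb0
  have hb0 : sharp x ≠ 0 := fun h => by
    rw [← hrad, h, smoothNorm_zero] at hx1
    exact hϖpos.not_gt hx1
  obtain ⟨binv, hbinv⟩ := hR.mul_inv_cancel hb0
  have hbinv_rad : smoothNorm binv = (smoothNorm x)⁻¹ := by
    rw [← hrad]
    exact eq_inv_of_mul_eq_one_right (by rw [← hmul, hbinv, smoothNorm_one])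
  obtain ⟨z, hz⟩ := hsurj (ϖ • binv) (powerBounded_of_smoothNorm_lt_one (by
    rwa [smoothNorm_smul, hbinv_rad, ← div_eq_mul_inv, div_lt_one (hϖpos.trans hx1)]))
  have hradϖ : smoothNorm (algebraMap K R ϖ) = ‖ϖ‖ := by
    rw [Algebra.algebraMap_eq_smul_one, smoothNorm_smul, smoothNorm_one, mul_one]
  have hclose : smoothNorm (sharp (x * z) - algebraMap K R ϖ) ≤ smoothNorm x * ‖ϖ‖ := by
    rw [Algebra.algebraMap_eq_smul_one, ← hbinv, ← mul_smul_comm, map_mul, ← mul_sub, ← hrad x]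
    refine (smoothNorm_mul_le K _ _).trans (mul_le_mul_of_nonneg_left ?_ (smoothNorm_nonneg _))
    exact (smoothNorm_le_norm _).trans (by rwa [norm_sub_rev])
  set d := algebraMap Kb Rb ϖb - x * z
  have hd : smoothNorm d < ‖ϖb‖ := by
    have h := hadd d (x * z)
    rw [sub_add_cancel, hsharpϖ] at h
    have := smoothNorm_le_of_smoothNorm_sub_sub_le K hq h hclose
      (by rw [hradϖ]; exact mul_lt_of_lt_one_left hϖpos hx2)
    rw [hradϖ, hrad] at this
    rw [hϖ]
    exact this.trans_lt (max_lt (mul_lt_of_lt_one_left hϖpos hq) (mul_lt_of_lt_one_left hϖpos hx2))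
  have hd_eq : 1 - x * (ϖb⁻¹ • z) = ϖb⁻¹ • d := by
    simp only [d, smul_sub, mul_smul_comm, Algebra.algebraMap_eq_smul_one, smul_smul,
      inv_mul_cancel₀ hϖb0, one_smul]
  refine isUnit_of_mul_isUnit_left (isUnit_of_smoothNorm_one_sub_lt_one (u := x * (ϖb⁻¹ • z)) ?_)
  rwa [hd_eq, smoothNorm_smul, norm_inv, inv_mul_lt_one₀ (norm_pos_iff.mpr hϖb0)]

lemma isUnit_of_isField_tilt (K : Type*) [DenselyNormedField K] [NormedAlgebra K R]
    [CompleteSpace R] (sharp : Rb →*₀ R) (hnorm : ∀ x, ‖sharp x‖ = ‖x‖) {ϖ : K}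
    (hsurj : ∀ a : R, PowerBounded a → ∃ x : Rb, ‖a - sharp x‖ ≤ ‖ϖ‖) (hRb : IsField Rb)
    (hmul : ∀ x y : Rb, smoothNorm (x * y) = smoothNorm x * smoothNorm y)
    {a : R} (ha1 : ‖ϖ‖ < smoothNorm a) (ha2 : smoothNorm a < 1) : IsUnit a := by
  have := hRb.nontrivial
  have hrad := smoothNorm_map sharp hnorm
  have hapos : 0 < smoothNorm a := (norm_nonneg ϖ).trans_lt ha1
  obtain ⟨x, hx⟩ := hsurj a (powerBounded_of_smoothNorm_lt_one ha2)
  have hxa : smoothNorm x = smoothNorm a := by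
    rw [← hrad]
    exact smoothNorm_eq_of_smoothNorm_sub_lt K (((smoothNorm_le_norm _).trans hx).trans_lt ha1)
  have hx0 : x ≠ 0 := by
    rintro rfl
    rw [smoothNorm_zero] at hxa
    exact hapos.ne hxa
  obtain ⟨xi, hxi⟩ := hRb.mul_inv_cancel hx0
  have hxi_rad : smoothNorm (sharp xi) = (smoothNorm a)⁻¹ := by
    rw [hrad, ← hxa]
    exact eq_inv_of_mul_eq_one_right (by rw [← hmul, hxi, smoothNorm_one])
  refine isUnit_of_mul_isUnit_left (isUnit_of_smoothNorm_one_sub_lt_one (u := a * sharp xi) ?_)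
  calc smoothNorm (1 - a * sharp xi) = smoothNorm ((sharp x - a) * sharp xi) := by
        rw [sub_mul, ← map_mul, hxi, map_one]
    _ ≤ smoothNorm (sharp x - a) * smoothNorm (sharp xi) := smoothNorm_mul_le K _ _
    _ ≤ ‖ϖ‖ * (smoothNorm a)⁻¹ := by
        rw [hxi_rad]
        refine mul_le_mul_of_nonneg_right ((smoothNorm_le_norm _).trans ?_) (by positivity)
        rwa [norm_sub_rev]
    _ < 1 := by rwa [← div_eq_mul_inv, div_lt_one hapos]

lemma smoothNorm_mul_of_tilt (K : Type*) [DenselyNormedField K] [NormedAlgebra K R]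
    (sharp : Rb →*₀ R) (hnorm : ∀ x, ‖sharp x‖ = ‖x‖) {ϖ : K}
    (hsurj : ∀ a : R, PowerBounded a → ∃ x : Rb, ‖a - sharp x‖ ≤ ‖ϖ‖)
    (hmul : ∀ x y : Rb, smoothNorm (x * y) = smoothNorm x * smoothNorm y)
    {a c : R} (ha : smoothNorm a < 1) (hc : smoothNorm c < 1)
    (hac : ‖ϖ‖ < smoothNorm a * smoothNorm c) :
    smoothNorm (a * c) = smoothNorm a * smoothNorm c := by
  have hrad := smoothNorm_map sharp hnorm
  have hϖa : ‖ϖ‖ < smoothNorm a :=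
    hac.trans_le (mul_le_of_le_one_right (smoothNorm_nonneg a) hc.le)
  have hϖc : ‖ϖ‖ < smoothNorm c :=
    hac.trans_le (mul_le_of_le_one_left (smoothNorm_nonneg c) ha.le)
  obtain ⟨x, hx⟩ := hsurj a (powerBounded_of_smoothNorm_lt_one ha)
  obtain ⟨y, hy⟩ := hsurj c (powerBounded_of_smoothNorm_lt_one hc)
  have hxa : smoothNorm (sharp x) = smoothNorm a :=
    smoothNorm_eq_of_smoothNorm_sub_lt K (((smoothNorm_le_norm _).trans hx).trans_lt hϖa)
  have hyc : smoothNorm (sharp y) = smoothNorm c :=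
    smoothNorm_eq_of_smoothNorm_sub_lt K (((smoothNorm_le_norm _).trans hy).trans_lt hϖc)
  have hprod : smoothNorm (sharp x * sharp y) = smoothNorm a * smoothNorm c := by
    rw [← map_mul, hrad, hmul, ← hrad, ← hrad, hxa, hyc]
  have hdiff : smoothNorm (a * c - sharp x * sharp y) ≤ ‖ϖ‖ :=
    calc smoothNorm (a * c - sharp x * sharp y)
        = smoothNorm (a * (c - sharp y) + sharp y * (a - sharp x)) := by congr 1; ring
      _ ≤ max (smoothNorm a * smoothNorm (c - sharp y))
            (smoothNorm (sharp y) * smoothNorm (a - sharp x)) :=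
          (smoothNorm_add_le_max K _ _).trans
            (max_le_max (smoothNorm_mul_le K _ _) (smoothNorm_mul_le K _ _))
      _ ≤ ‖ϖ‖ := max_le
          ((mul_le_of_le_one_left (smoothNorm_nonneg _) ha.le).trans
            ((smoothNorm_le_norm _).trans hy))
          ((mul_le_of_le_one_left (smoothNorm_nonneg _) (hyc ▸ hc.le)).trans
            ((smoothNorm_le_norm _).trans hx))
  rw [← hprod]
  exact smoothNorm_eq_of_smoothNorm_sub_lt K
    (by rw [smoothNorm_sub_comm, hprod]; exact hdiff.trans_lt hac)

end Tilt

theorem perfectoid_field_iff_tilt_general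
    (K : Type u) [NontriviallyNormedField K]
    (p : ℕ) (hp : p.Prime) (hK : IsPerfectoidNormedField K p)
    (Kb : Type u) [NontriviallyNormedField Kb]
    (hKb : IsPerfectoidNormedField Kb p)
    (sharpK : Kb →*₀ K) (hnormK : ∀ t : Kb, ‖sharpK t‖ = ‖t‖)
    (R : Type u) [NormedCommRing R] [NormedAlgebra K R] [CompleteSpace R]
    [IsUltrametricDist R]
    (ϖ : K) (hϖ1 : ‖ϖ‖ < 1)
    (hR : IsPerfectoidAlgebra K R p ϖ)
    (Rb : Type u) [NormedCommRing Rb] [NormedAlgebra Kb Rb] [CompleteSpace Rb]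
    (ϖb : Kb) (hϖb0 : ϖb ≠ 0) (hϖϖb : sharpK ϖb = ϖ)
    (hRb : IsPerfectoidAlgebra Kb Rb p ϖb)
    (sharp : Rb →*₀ R) (hnorm : ∀ x : Rb, ‖sharp x‖ = ‖x‖)
    (hscal : ∀ t : Kb, sharp (algebraMap Kb Rb t) = algebraMap K R (sharpK t))
    (root : Rb → Rb) (hroot : ∀ x, root x ^ p = x)
    (hlim : ∀ x y : Rb, Filter.Tendsto
        (fun n => (sharp (root^[n] x) + sharp (root^[n] y)) ^ p ^ n)
        Filter.atTop (nhds (sharp (x + y))))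
    (hsurj : ∀ a : R, PowerBounded a → ∃ x : Rb, ‖a - sharp x‖ ≤ ‖ϖ‖) :
    (∀ x : Rb, spectralNrm Kb Rb x = spectralNrm K R (sharp x)) ∧
    ((IsField R ∧ ∀ x y : R, spectralNrm K R (x * y) = spectralNrm K R x * spectralNrm K R y)
      ↔ (IsField Rb ∧ ∀ x y : Rb,
          spectralNrm Kb Rb (x * y) = spectralNrm Kb Rb x * spectralNrm Kb Rb y)) := by
  have := hK.1
  let := DenselyNormedField.ofNotDiscrete hK.2.1
  let := DenselyNormedField.ofNotDiscrete hKb.2.1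
  have hrad := smoothNorm_map sharp hnorm
  have hϖ : ‖ϖb‖ = ‖ϖ‖ := by rw [← hϖϖb, hnormK]
  have hadd (u v : Rb) : smoothNorm (sharp (u + v) - sharp u - sharp v)
      ≤ ‖(p : K)‖ * max (smoothNorm (sharp u)) (smoothNorm (sharp v)) :=
    smoothNorm_sub_sub_le_of_tendsto K hp (fun n => by rw [← map_pow, iterate_pow_pow_eq hroot])
      (fun n => by rw [← map_pow, iterate_pow_pow_eq hroot]) (hlim u v)
  simp only [spectralNrm_eq_smoothNorm, hrad, implies_true, true_and]
  constructor
  · rintro ⟨hRfield, hRmul⟩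
    have := hRfield.nontrivial
    have : Nontrivial Rb := ⟨0, 1, fun h => by simpa using congrArg sharp h⟩
    refine ⟨isField_of_forall_isUnit_of_mem_Ioo Kb hRb.2.1 (norm_nonneg ϖ) hϖ1 fun x hx1 hx2 => ?_,
      fun x y => by rw [← hrad, map_mul, hRmul, hrad, hrad]⟩
    exact isUnit_tilt_of_isField K sharp hnorm hK.2.2.1 hadd hϖb0 hϖ
      (by rw [hscal, hϖϖb]) hsurj hRfield hRmul hx1 hx2
  · rintro ⟨hRbfield, hRbmul⟩
    have := hRbfield.nontrivial
    have : Nontrivial R := ⟨1, 0, fun h =>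
      one_ne_zero (norm_eq_zero.mp (by simpa [h] using (hnorm 1).symm) : (1 : Rb) = 0)⟩
    have hsqrt : √‖ϖ‖ < 1 := (Real.sqrt_lt' one_pos).mpr (by rwa [one_pow])
    refine ⟨isField_of_forall_isUnit_of_mem_Ioo K hR.2.1 (norm_nonneg ϖ) hϖ1 fun a ha1 ha2 =>
      isUnit_of_isField_tilt K sharp hnorm hsurj hRbfield hRbmul ha1 ha2,
      smoothNorm_mul_of_forall_mem_Ioo K (Real.sqrt_nonneg _) hsqrt fun a c ha1 ha2 hc1 hc2 =>
        smoothNorm_mul_of_tilt K sharp hnorm hsurj hRbmul ha2 hc2 ?_⟩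
    rw [← Real.mul_self_sqrt (norm_nonneg ϖ)]
    exact mul_lt_mul'' ha1 hc1 (Real.sqrt_nonneg _) (Real.sqrt_nonneg _)

/-- Let `R` be a perfectoid `K`-algebra with tilt `R^♭` (encoded abstractly via the
multiplicative projection `sharp : R^♭ → R` with `p`-th roots, the limit formula for
addition, compatibility with the tilt `K^♭ → K` of scalars, and `R^{♭°}/ϖ^♭ ≅ R°/ϖ`).
Then the spectral norms satisfy `‖x‖_{R^♭} = ‖x^♯‖_R` for all `x ∈ R^♭`, and `R` is a
perfectoid field (i.e. a field whose spectral norm is multiplicative) if and only if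
`R^♭` is. -/
theorem perfectoid_field_iff_tilt
    (K : Type u) [NontriviallyNormedField K] [CompleteSpace K]
    (p : ℕ) (hp : p.Prime) (hK : IsPerfectoidNormedField K p)
    (Kb : Type u) [NontriviallyNormedField Kb] [CompleteSpace Kb] [CharP Kb p]
    (hKb : IsPerfectoidNormedField Kb p)
    (sharpK : Kb →*₀ K) (hnormK : ∀ t : Kb, ‖sharpK t‖ = ‖t‖)
    (R : Type u) [NormedCommRing R] [NormedAlgebra K R] [CompleteSpace R]
    [IsUltrametricDist R]
    (ϖ : K) (hϖ0 : ϖ ≠ 0) (hϖp : ‖(p : K)‖ ≤ ‖ϖ‖) (hϖ1 : ‖ϖ‖ < 1)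
    (hR : IsPerfectoidAlgebra K R p ϖ)
    (Rb : Type u) [NormedCommRing Rb] [NormedAlgebra Kb Rb] [CompleteSpace Rb]
    [IsUltrametricDist Rb]
    (ϖb : Kb) (hϖb0 : ϖb ≠ 0) (hϖb1 : ‖ϖb‖ < 1) (hϖϖb : sharpK ϖb = ϖ)
    (hRb : IsPerfectoidAlgebra Kb Rb p ϖb)
    (sharp : Rb →*₀ R) (hnorm : ∀ x : Rb, ‖sharp x‖ = ‖x‖)
    (hscal : ∀ t : Kb, sharp (algebraMap Kb Rb t) = algebraMap K R (sharpK t))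
    (root : Rb → Rb) (hroot : ∀ x, root x ^ p = x)
    (hlim : ∀ x y : Rb, Filter.Tendsto
        (fun n => (sharp (root^[n] x) + sharp (root^[n] y)) ^ p ^ n)
        Filter.atTop (nhds (sharp (x + y))))
    (hsurj : ∀ a : R, PowerBounded a → ∃ x : Rb, ‖a - sharp x‖ ≤ ‖ϖ‖) :
    (∀ x : Rb, spectralNrm Kb Rb x = spectralNrm K R (sharp x)) ∧
    ((IsField R ∧ ∀ x y : R, spectralNrm K R (x * y) = spectralNrm K R x * spectralNrm K R y)
      ↔ (IsField Rb ∧ ∀ x y : Rb,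
          spectralNrm Kb Rb (x * y) = spectralNrm Kb Rb x * spectralNrm Kb Rb y)) :=
  perfectoid_field_iff_tilt_general K p hp hK Kb hKb sharpK hnormK R ϖ hϖ1 hR Rb ϖb hϖb0 hϖϖb hRb
    sharp hnorm hscal root hroot hlim hsurj
end
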